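/- arXiv:1612.05373 — 10 statements merged into one kernel-verified Lean document; each statement's English description precedes it below -/
import Mathlib

section
/- Let p : (0,1) → ℝ be integrable, non-decreasing on (0, 1/2), and symmetric (p(x) = p(1-x) for all x ∈ (0,1)). Then for every convex function φ : (0,1) → ℝ (integrable on (0,1)), one has ∫₀¹ p(x)φ(x) dx ≤ (∫₀¹ p(x) dx) · (∫₀¹ φ(x) dx). -/
open MeasureTheory Set

private lemma ls_refl_mp : MeasurePreserving (fun x : ℝ => 1 - x) volume volume :=
  Measure.measurePreserving_sub_left volume 1

private lemma ls_refl_me : MeasurableEmbedding (fun x : ℝ => 1 - x) :=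
  (MeasurableEquiv.subLeft (1:ℝ)).measurableEmbedding

private lemma ls_refl_pre (a b : ℝ) : (fun x : ℝ => 1 - x) ⁻¹' Ioo (1-b) (1-a) = Ioo a b := by
  ext x; simp only [mem_preimage, mem_Ioo]
  constructor <;> intro h <;> exact ⟨by linarith [h.1, h.2], by linarith [h.1, h.2]⟩

private lemma ls_refl_int (f : ℝ → ℝ) (a b : ℝ) :
    ∫ x in Ioo a b, f (1 - x) = ∫ x in Ioo (1-b) (1-a), f x := by
  rw [← ls_refl_pre a b]
  exact ls_refl_mp.setIntegral_preimage_emb ls_refl_me f _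

private lemma ls_refl_integrable {f : ℝ → ℝ} {a b : ℝ} (h : IntegrableOn f (Ioo (1-b) (1-a))) :
    IntegrableOn (fun x => f (1 - x)) (Ioo a b) := by
  have := (ls_refl_mp.integrableOn_comp_preimage ls_refl_me (f := f) (s := Ioo (1-b) (1-a))).2 h
  rwa [ls_refl_pre] at this

private lemma ls_refl_int01 (f : ℝ → ℝ) :
    ∫ x in Ioo (0:ℝ) 1, f (1 - x) = ∫ x in Ioo (0:ℝ) 1, f x := by
  have := ls_refl_int f 0 1; norm_num at this; exact this

private lemma ls_refl_integrable01 {f : ℝ → ℝ} (h : IntegrableOn f (Ioo (0:ℝ) 1)) :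
    IntegrableOn (fun x => f (1 - x)) (Ioo (0:ℝ) 1) := by
  apply ls_refl_integrable (a := 0) (b := 1); norm_num; exact h

private lemma ls_cheb {s : Set ℝ} (hs : MeasurableSet s) (hfin : volume s ≠ ⊤)
    {f g : ℝ → ℝ} (hf : IntegrableOn f s) (hg : IntegrableOn g s)
    (hfg : IntegrableOn (fun x => f x * g x) s)
    (hanti : ∀ x ∈ s, ∀ y ∈ s, (f x - f y) * (g x - g y) ≤ 0) :
    (volume s).toReal * ∫ x in s, f x * g x ≤ (∫ x in s, f x) * ∫ x in s, g x := by
  set μ := volume.restrict s with hμ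
  haveI : IsFiniteMeasure μ := ⟨by rw [hμ, Measure.restrict_apply_univ]; exact hfin.lt_top⟩
  have h1 : Integrable (fun z : ℝ × ℝ => f z.1 * g z.1) (μ.prod μ) := by
    simpa using hfg.mul_prod (integrable_const (1:ℝ))
  have h2 : Integrable (fun z : ℝ × ℝ => f z.2 * g z.2) (μ.prod μ) := by
    simpa using (integrable_const (1:ℝ)).mul_prod hfg
  have h3 : Integrable (fun z : ℝ × ℝ => f z.1 * g z.2) (μ.prod μ) := hf.mul_prod hg
  have h4 : Integrable (fun z : ℝ × ℝ => g z.1 * f z.2) (μ.prod μ) := hg.mul_prod hf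
  have hexp : (fun z : ℝ × ℝ => (f z.1 - f z.2) * (g z.1 - g z.2)) =
      fun z => (f z.1 * g z.1 + f z.2 * g z.2) - (f z.1 * g z.2 + g z.1 * f z.2) := by
    funext z; ring
  have hM : ∫ _x : ℝ, (1:ℝ) ∂μ = (volume s).toReal := by
    simp [hμ, Measure.restrict_apply_univ, Measure.real]
  have e1 : ∫ z : ℝ × ℝ, f z.1 * g z.1 ∂(μ.prod μ) = (∫ x, f x * g x ∂μ) * (volume s).toReal := by
    have := integral_prod_mul (μ := μ) (ν := μ) (fun x => f x * g x) (fun _ => (1:ℝ))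
    simpa [hM] using this
  have e2 : ∫ z : ℝ × ℝ, f z.2 * g z.2 ∂(μ.prod μ) = (volume s).toReal * ∫ x, f x * g x ∂μ := by
    have := integral_prod_mul (μ := μ) (ν := μ) (fun _ => (1:ℝ)) (fun x => f x * g x)
    simpa [hM] using this
  have e3 : ∫ z : ℝ × ℝ, f z.1 * g z.2 ∂(μ.prod μ) = (∫ x, f x ∂μ) * ∫ x, g x ∂μ :=
    integral_prod_mul f g
  have e4 : ∫ z : ℝ × ℝ, g z.1 * f z.2 ∂(μ.prod μ) = (∫ x, g x ∂μ) * ∫ x, f x ∂μ :=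
    integral_prod_mul g f
  have hE : ∫ z : ℝ × ℝ, (f z.1 - f z.2) * (g z.1 - g z.2) ∂(μ.prod μ) ≤ 0 := by
    apply integral_nonpos_of_ae
    have hprod : μ.prod μ = (volume.prod volume).restrict (s ×ˢ s) := by
      rw [hμ]; exact Measure.prod_restrict s s
    rw [hprod]
    filter_upwards [ae_restrict_mem (hs.prod hs)] with z hz
    exact hanti z.1 hz.1 z.2 hz.2
  have hEeq : ∫ z : ℝ × ℝ, (f z.1 - f z.2) * (g z.1 - g z.2) ∂(μ.prod μ)
      = 2 * ((volume s).toReal * ∫ x, f x * g x ∂μ) - 2 * ((∫ x, f x ∂μ) * ∫ x, g x ∂μ) := by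
    have hadd1 : Integrable (fun z : ℝ × ℝ => f z.1 * g z.1 + f z.2 * g z.2) (μ.prod μ) :=
      h1.add h2
    have hadd2 : Integrable (fun z : ℝ × ℝ => f z.1 * g z.2 + g z.1 * f z.2) (μ.prod μ) :=
      h3.add h4
    rw [hexp, integral_sub hadd1 hadd2, integral_add h1 h2, integral_add h3 h4, e1, e2, e3, e4]
    ring
  rw [hEeq] at hE
  linarith [hE]

private lemma ls_half {f : ℝ → ℝ} (hint : IntegrableOn f (Ioo (0:ℝ) 1))
    (hsym : ∀ x ∈ Ioo (0:ℝ) 1, f (1 - x) = f x) :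
    ∫ x in Ioo (0:ℝ) 1, f x = 2 * ∫ x in Ioo (0:ℝ) (1/2), f x := by
  have hrefl : ∫ x in Ioo (1/2:ℝ) 1, f x = ∫ x in Ioo (0:ℝ) (1/2), f x := by
    have h := ls_refl_int f 0 (1/2)
    norm_num at h
    rw [← h]
    apply setIntegral_congr_fun measurableSet_Ioo
    intro x hx
    exact hsym x ⟨hx.1, by linarith [hx.2]⟩
  have hunion : Ioo (0:ℝ) (1/2) ∪ Ico (1/2:ℝ) 1 = Ioo (0:ℝ) 1 :=
    Ioo_union_Ico_eq_Ioo (by norm_num) (by norm_num)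
  have hdisj : Disjoint (Ioo (0:ℝ) (1/2)) (Ico (1/2:ℝ) 1) := by
    apply Set.disjoint_left.2
    intro x hx hx'
    exact absurd hx.2 (not_lt.2 hx'.1)
  have hsplit : ∫ x in Ioo (0:ℝ) 1, f x
      = (∫ x in Ioo (0:ℝ) (1/2), f x) + ∫ x in Ico (1/2:ℝ) 1, f x := by
    rw [← hunion]
    exact setIntegral_union hdisj measurableSet_Ico
      (hint.mono_set (by rw [← hunion]; exact subset_union_left))
      (hint.mono_set (by rw [← hunion]; exact subset_union_right))
  rw [hsplit, integral_Ico_eq_integral_Ioo, hrefl]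
  ring

set_option maxHeartbeats 1000000 in
/-- **Levin–Stečkin inequality.** If `p` is integrable on `(0,1)`, non-decreasing on
`(0, 1/2)` and symmetric (`p x = p (1-x)`), then for every convex integrable
function `φ` on `(0,1)` (with the product `p·φ` also integrable),
`∫₀¹ p φ ≤ (∫₀¹ p) (∫₀¹ φ)`. -/
theorem levin_steckin (p φ : ℝ → ℝ)
    (hp_int : IntegrableOn p (Ioo 0 1))
    (hp_mono : MonotoneOn p (Ioo 0 (1/2)))
    (hp_symm : ∀ x ∈ Ioo (0:ℝ) 1, p x = p (1 - x))
    (hφ_conv : ConvexOn ℝ (Ioo 0 1) φ)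
    (hφ_int : IntegrableOn φ (Ioo 0 1))
    (hpφ_int : IntegrableOn (fun x => p x * φ x) (Ioo 0 1)) :
    ∫ x in Ioo (0:ℝ) 1, p x * φ x ≤
      (∫ x in Ioo (0:ℝ) 1, p x) * ∫ x in Ioo (0:ℝ) 1, φ x := by
  set c : ℝ := ∫ x in Ioo (0:ℝ) 1, p x with hc
  set q : ℝ → ℝ := fun x => p x - c with hq
  set ψ : ℝ → ℝ := fun x => (φ x + φ (1 - x)) / 2 with hψ
  have hvol1 : volume (Ioo (0:ℝ) 1) = 1 := by
    rw [Real.volume_Ioo]; norm_num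
  have hconst_int : IntegrableOn (fun _ : ℝ => c) (Ioo (0:ℝ) 1) :=
    integrableOn_const (by rw [hvol1]; exact ENNReal.one_ne_top)
  have hq_int : IntegrableOn q (Ioo (0:ℝ) 1) := hp_int.sub hconst_int
  have hq0 : ∫ x in Ioo (0:ℝ) 1, q x = 0 := by
    rw [hq]
    rw [integral_sub hp_int hconst_int, setIntegral_const, Measure.real, hvol1]
    simp [hc]
  have hq_symm : ∀ x ∈ Ioo (0:ℝ) 1, q x = q (1 - x) := by
    intro x hx; simp only [hq]; rw [hp_symm x hx]
  -- integrability of reflected pieces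
  have hφr_int : IntegrableOn (fun x => φ (1 - x)) (Ioo (0:ℝ) 1) := ls_refl_integrable01 hφ_int
  have hqφ_int : IntegrableOn (fun x => q x * φ x) (Ioo (0:ℝ) 1) := by
    have heq : (fun x => q x * φ x) = fun x => p x * φ x - c * φ x := by
      funext x; simp only [hq]; ring
    rw [heq]; exact hpφ_int.sub (hφ_int.const_mul c)
  have hqφr_int : IntegrableOn (fun x => q x * φ (1 - x)) (Ioo (0:ℝ) 1) := by
    have h0 : IntegrableOn (fun x => q (1 - x) * φ (1 - x)) (Ioo (0:ℝ) 1) :=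
      ls_refl_integrable01 hqφ_int
    apply h0.congr
    filter_upwards [ae_restrict_mem measurableSet_Ioo] with x hx
    rw [← hq_symm x hx]
  have hqψ_eq : (fun x => q x * ψ x) = fun x => (q x * φ x + q x * φ (1 - x)) / 2 := by
    funext x; simp only [hψ]; ring
  have hqψ_int : IntegrableOn (fun x => q x * ψ x) (Ioo (0:ℝ) 1) := by
    rw [hqψ_eq]; exact (hqφ_int.add hqφr_int).div_const 2
  -- Step 1 : ∫ qψ = ∫ qφ
  have hstep1 : ∫ x in Ioo (0:ℝ) 1, q x * ψ x = ∫ x in Ioo (0:ℝ) 1, q x * φ x := by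
    have hrefl : ∫ x in Ioo (0:ℝ) 1, q x * φ (1 - x) = ∫ x in Ioo (0:ℝ) 1, q x * φ x := by
      have h1 : ∫ x in Ioo (0:ℝ) 1, q x * φ (1 - x)
          = ∫ x in Ioo (0:ℝ) 1, q (1 - x) * φ (1 - x) := by
        apply setIntegral_congr_fun measurableSet_Ioo
        intro x hx
        show q x * φ (1 - x) = q (1 - x) * φ (1 - x)
        rw [← hq_symm x hx]
      rw [h1, ls_refl_int01 (fun x => q x * φ x)]
    rw [hqψ_eq, integral_div, integral_add hqφ_int hqφr_int, hrefl]
    ring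
  -- Step 2 : halving
  have hψ_symm : ∀ x : ℝ, ψ (1 - x) = ψ x := by
    intro x; simp only [hψ, sub_sub_cancel]; ring
  have hqψ_symm : ∀ x ∈ Ioo (0:ℝ) 1, q (1 - x) * ψ (1 - x) = q x * ψ x := by
    intro x hx; rw [← hq_symm x hx, hψ_symm]
  have hstep2 : ∫ x in Ioo (0:ℝ) 1, q x * ψ x = 2 * ∫ x in Ioo (0:ℝ) (1/2), q x * ψ x :=
    ls_half hqψ_int hqψ_symm
  have hqhalf0 : ∫ x in Ioo (0:ℝ) (1/2), q x = 0 := by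
    have := ls_half hq_int (fun x hx => (hq_symm x hx).symm)
    rw [hq0] at this
    linarith
  -- subset facts
  have hsub : Ioo (0:ℝ) (1/2) ⊆ Ioo (0:ℝ) 1 := Ioo_subset_Ioo_right (by norm_num)
  -- ψ antitone on (0,1/2)
  have hψ_anti : ∀ x ∈ Ioo (0:ℝ) (1/2), ∀ y ∈ Ioo (0:ℝ) (1/2), x ≤ y → ψ y ≤ ψ x := by
    intro x hx y hy hxy
    rcases eq_or_lt_of_le hxy with rfl | hlt
    · exact le_refl _
    have hx1 : x ∈ Ioo (0:ℝ) 1 := hsub hx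
    have h1x : (1 - x) ∈ Ioo (0:ℝ) 1 := ⟨by linarith [hx.2], by linarith [hx.1]⟩
    have hden : 0 < 1 - 2*x := by linarith [hx.2]
    set t : ℝ := (1 - x - y) / (1 - 2*x) with ht
    have ht0 : 0 ≤ t := div_nonneg (by linarith [hx.2, hy.2]) hden.le
    have ht1 : t ≤ 1 := by
      rw [ht, div_le_one hden]; linarith
    have hsum : t + (1 - t) = 1 := by ring
    have hyc : t * x + (1 - t) * (1 - x) = y := by
      rw [ht]; linear_combination (-1 : ℝ) * div_mul_cancel₀ (1 - x - y) hden.ne'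
    have hyc2 : t * (1 - x) + (1 - t) * x = 1 - y := by
      rw [ht]; linear_combination div_mul_cancel₀ (1 - x - y) hden.ne'
    have H1 := hφ_conv.2 hx1 h1x ht0 (by linarith) hsum
    have H2 := hφ_conv.2 h1x hx1 ht0 (by linarith) hsum
    simp only [smul_eq_mul] at H1 H2
    rw [hyc] at H1
    rw [hyc2] at H2
    simp only [hψ]
    linarith
  -- q monotone on (0,1/2)
  have hq_mono : ∀ x ∈ Ioo (0:ℝ) (1/2), ∀ y ∈ Ioo (0:ℝ) (1/2), x ≤ y → q x ≤ q y := by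
    intro x hx y hy h
    simp only [hq]
    exact sub_le_sub_right (hp_mono hx hy h) c
  have hanti : ∀ x ∈ Ioo (0:ℝ) (1/2), ∀ y ∈ Ioo (0:ℝ) (1/2),
      (q x - q y) * (ψ x - ψ y) ≤ 0 := by
    intro x hx y hy
    rcases le_total x y with h | h
    · have h1 := hq_mono x hx y hy h
      have h2 := hψ_anti x hx y hy h
      nlinarith
    · have h1 := hq_mono y hy x hx h
      have h2 := hψ_anti y hy x hx h
      nlinarith
  -- ψ integrable
  have hψ_int : IntegrableOn ψ (Ioo (0:ℝ) 1) := by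
    have : ψ = fun x => (φ x + φ (1 - x)) / 2 := hψ
    rw [this]; exact (hφ_int.add hφr_int).div_const 2
  -- apply Chebyshev on (0, 1/2)
  have hvolh : volume (Ioo (0:ℝ) (1/2)) = ENNReal.ofReal (1/2) := by
    rw [Real.volume_Ioo]; norm_num
  have hcheb := ls_cheb (s := Ioo (0:ℝ) (1/2)) measurableSet_Ioo
    (by rw [hvolh]; exact ENNReal.ofReal_ne_top)
    (hq_int.mono_set hsub) (hψ_int.mono_set hsub) (hqψ_int.mono_set hsub) hanti
  rw [hqhalf0, hvolh] at hcheb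
  have htoReal : (ENNReal.ofReal (1/2 : ℝ)).toReal = 1/2 := by
    rw [ENNReal.toReal_ofReal]; norm_num
  rw [htoReal] at hcheb
  have hhalf_nonpos : ∫ x in Ioo (0:ℝ) (1/2), q x * ψ x ≤ 0 := by linarith
  -- conclude
  have hqφ_nonpos : ∫ x in Ioo (0:ℝ) 1, q x * φ x ≤ 0 := by
    rw [← hstep1, hstep2]; linarith
  have hexpand : ∫ x in Ioo (0:ℝ) 1, q x * φ x
      = (∫ x in Ioo (0:ℝ) 1, p x * φ x) - c * ∫ x in Ioo (0:ℝ) 1, φ x := by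
    have heq : (fun x => q x * φ x) = fun x => p x * φ x - c * φ x := by
      funext x; simp only [hq]; ring
    rw [heq, integral_sub hpφ_int (hφ_int.const_mul c), integral_const_mul]
  rw [hexpand] at hqφ_nonpos
  linarith
end

section
/- Let p : (0,1) → ℝ be integrable, non-decreasing on (0, 1/2), and symmetric (p(x) = p(1-x) for all x ∈ (0,1)). Let φ : (0,1) → ℝ be convex, integrable, and symmetric (φ(x) = φ(1-x) for all x ∈ (0,1)). Then ∫₀¹ p(x)φ(x) dx ≤ (∫₀¹ p(x) dx) · (∫₀¹ φ(x) dx). -/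
/-!
Convexity and symmetry make `φ` non-increasing on `(0, 1/2)`, so after folding `(0,1)` onto
`(0, 1/2)` by `x ↦ min x (1 - x)` the functions `p` and `φ` are oppositely ordered on `(0,1)`
minus its midpoint (a null set, where the monotonicity of `p` says nothing). Hence
`(p x - p y) (φ x - φ y) ≤ 0` almost everywhere on the square, and expanding the integral of
this product over `(0,1)²` gives Chebyshev's integral inequality `2 (∫ p φ - ∫ p ∫ φ) ≤ 0`.
-/

open MeasureTheory Set

section Chebyshev

variable {α : Type*} [MeasurableSpace α] {μ : Measure α} [IsProbabilityMeasure μ] {f g : α → ℝ}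

lemma integral_prod_sub_mul_sub (hf : Integrable f μ) (hg : Integrable g μ)
    (hfg : Integrable (fun x ↦ f x * g x) μ) :
    ∫ z, (f z.1 - f z.2) * (g z.1 - g z.2) ∂μ.prod μ =
      2 * (∫ x, f x * g x ∂μ - (∫ x, f x ∂μ) * ∫ x, g x ∂μ) := by
  have expand : (fun z : α × α ↦ (f z.1 - f z.2) * (g z.1 - g z.2)) =
      fun z ↦ f z.1 * g z.1 + f z.2 * g z.2 - f z.1 * g z.2 - g z.1 * f z.2 := by
    funext z; ring
  have h₁ := hfg.comp_fst μ
  have h₂ := hfg.comp_snd μ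
  have h₃ := hf.mul_prod hg
  have h₄ := hg.mul_prod hf
  rw [expand, integral_sub, integral_sub, integral_add h₁ h₂,
    integral_fun_fst (fun x ↦ f x * g x), integral_fun_snd (fun x ↦ f x * g x),
    integral_prod_mul, integral_prod_mul]
  · simp only [probReal_univ, one_smul]
    ring
  exacts [h₁.add h₂, h₃, (h₁.add h₂).sub h₃, h₄]

theorem integral_mul_le_integral_mul_integral_of_antivaryOn {s : Set α}
    (hs : ∀ᵐ x ∂μ, x ∈ s) (hfg_anti : AntivaryOn f g s)
    (hf : Integrable f μ) (hg : Integrable g μ) (hfg : Integrable (fun x ↦ f x * g x) μ) :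
    ∫ x, f x * g x ∂μ ≤ (∫ x, f x ∂μ) * ∫ x, g x ∂μ := by
  have hs₂ : ∀ᵐ z ∂μ.prod μ, z.1 ∈ s ∧ z.2 ∈ s :=
    (Measure.quasiMeasurePreserving_fst.ae hs).and (Measure.quasiMeasurePreserving_snd.ae hs)
  have hnonpos : ∫ z, (f z.1 - f z.2) * (g z.1 - g z.2) ∂μ.prod μ ≤ 0 :=
    integral_nonpos_of_ae <| hs₂.mono fun z hz ↦ hfg_anti.sub_mul_sub_nonpos hz.2 hz.1
  rw [integral_prod_sub_mul_sub hf hg hfg] at hnonpos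
  linarith

end Chebyshev

lemma ConvexOn.antitoneOn_of_symmetric {φ : ℝ → ℝ} (hφ_conv : ConvexOn ℝ (Ioo 0 1) φ)
    (hφ_symm : ∀ x ∈ Ioo (0:ℝ) 1, φ x = φ (1 - x)) : AntitoneOn φ (Ioo 0 (1/2)) := by
  intro a ha b hb hab
  have ha₁ : a ∈ Ioo (0:ℝ) 1 := ⟨ha.1, by linarith [ha.2]⟩
  have ha₂ : 1 - a ∈ Ioo (0:ℝ) 1 := ⟨by linarith [ha.2], by linarith [ha.1]⟩
  have hb_mem : b ∈ segment ℝ a (1 - a) := by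
    rw [segment_eq_Icc (by linarith [ha.2])]
    exact ⟨hab, by linarith [ha.2, hb.2]⟩
  simpa [← hφ_symm a ha₁] using hφ_conv.le_on_segment ha₁ ha₂ hb_mem

lemma apply_min_one_sub {f : ℝ → ℝ} (hf_symm : ∀ x ∈ Ioo (0:ℝ) 1, f x = f (1 - x)) {x : ℝ}
    (hx : x ∈ Ioo (0:ℝ) 1) : f (min x (1 - x)) = f x := by
  rcases min_choice x (1 - x) with h | h <;> rw [h]
  exact (hf_symm x hx).symm

lemma min_one_sub_mem_Ioo {x : ℝ} (hx : x ∈ Ioo (0:ℝ) 1 \ {1/2}) :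
    min x (1 - x) ∈ Ioo (0:ℝ) (1/2) := by
  obtain ⟨⟨hx₀, hx₁⟩, hx_ne⟩ := hx
  rcases lt_or_gt_of_ne hx_ne with h | h
  · rw [min_eq_left (by linarith)]; exact ⟨hx₀, h⟩
  · rw [min_eq_right (by linarith)]; exact ⟨by linarith, by linarith⟩

lemma antivaryOn_of_symmetric {p φ : ℝ → ℝ} (hp_mono : MonotoneOn p (Ioo 0 (1/2)))
    (hp_symm : ∀ x ∈ Ioo (0:ℝ) 1, p x = p (1 - x)) (hφ_anti : AntitoneOn φ (Ioo 0 (1/2)))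
    (hφ_symm : ∀ x ∈ Ioo (0:ℝ) 1, φ x = φ (1 - x)) :
    AntivaryOn p φ (Ioo 0 1 \ {1/2}) := by
  have hfold := ((hp_mono.antivaryOn hφ_anti).comp_right fun x ↦ min x (1 - x)).subset
    fun x hx ↦ min_one_sub_mem_Ioo hx
  intro x hx y hy hlt
  have := @hfold x hx y hy
  simp only [Function.comp_def, apply_min_one_sub hp_symm hx.1, apply_min_one_sub hp_symm hy.1,
    apply_min_one_sub hφ_symm hx.1, apply_min_one_sub hφ_symm hy.1] at this
  exact this hlt

/-- **Symmetric case of the Levin–Stečkin inequality.** If `p` is integrable on `(0,1)`,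
non-decreasing on `(0, 1/2)` and symmetric, and `φ` is convex, integrable and symmetric
on `(0,1)` (with `p·φ` integrable), then `∫₀¹ p φ ≤ (∫₀¹ p) (∫₀¹ φ)`. -/
theorem levin_steckin_symmetric (p φ : ℝ → ℝ)
    (hp_int : IntegrableOn p (Ioo 0 1))
    (hp_mono : MonotoneOn p (Ioo 0 (1/2)))
    (hp_symm : ∀ x ∈ Ioo (0:ℝ) 1, p x = p (1 - x))
    (hφ_conv : ConvexOn ℝ (Ioo 0 1) φ)
    (hφ_int : IntegrableOn φ (Ioo 0 1))
    (hφ_symm : ∀ x ∈ Ioo (0:ℝ) 1, φ x = φ (1 - x))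
    (hpφ_int : IntegrableOn (fun x => p x * φ x) (Ioo 0 1)) :
    ∫ x in Ioo (0:ℝ) 1, p x * φ x ≤
      (∫ x in Ioo (0:ℝ) 1, p x) * ∫ x in Ioo (0:ℝ) 1, φ x := by
  have : IsProbabilityMeasure (volume.restrict (Ioo (0:ℝ) 1)) := ⟨by simp [Real.volume_Ioo]⟩
  have hae : ∀ᵐ x ∂volume.restrict (Ioo (0:ℝ) 1), x ∈ Ioo 0 1 \ {1/2} :=
    (ae_restrict_mem measurableSet_Ioo).and (ae_restrict_of_ae (Measure.ae_ne volume _))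
  exact integral_mul_le_integral_mul_integral_of_antivaryOn hae
    (antivaryOn_of_symmetric hp_mono hp_symm (hφ_conv.antitoneOn_of_symmetric hφ_symm) hφ_symm)
    hp_int hφ_int hpφ_int
end

section
/- Let p : (0,1) → ℝ be a nonnegative integrable function that is symmetric (p(x) = p(1-x) for all x ∈ (0,1)) and non-decreasing on (0, 1/2). Then for every concave, positive, integrable function φ : (0,1) → ℝ one has ∫₀¹ p(x)φ(x) dx ≤ (∫₀¹ φ(x) dx) · (∫₀¹ 4·min{x, 1-x}·p(x) dx). -/
/-!
Folding `(0,1)` at `1/2` with the symmetry of `p` turns the inequality into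
`∫₀^{1/2} p ψ ≤ 8 (∫₀^{1/2} ψ) (∫₀^{1/2} x p(x) dx)` for the concave function
`ψ(x) = φ(x) + φ(1 - x)`. Since `ψ ≥ 0` is concave, `ψ(x)/x` is non-increasing, whence
`∫₀^t ψ ≥ 4t² ∫₀^{1/2} ψ`: the weight `h(x) = 8 (∫₀^{1/2} ψ) x - ψ(x)` has nonnegative tail
integrals `∫_t^{1/2} h`. The superlevel sets of the non-decreasing `p ≥ 0` are such tails up to a
point, so the layer cake formula `∫ p h = ∫_{s > 0} ∫_{p > s} h ds` gives `∫ p h ≥ 0`.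
-/

open MeasureTheory Set Filter Topology
open scoped ENNReal

section LayerCake

variable {α : Type*} [MeasurableSpace α] {μ : Measure α}

theorem lintegral_ofReal_mul_eq_lintegral_setLIntegral_lt [SFinite μ] {f : α → ℝ}
    {G : α → ℝ≥0∞} (hf : 0 ≤ᵐ[μ] f) (hf_meas : AEMeasurable f μ) (hG : AEMeasurable G μ) :
    ∫⁻ x, ENNReal.ofReal (f x) * G x ∂μ = ∫⁻ s in Ioi 0, ∫⁻ x in {x | s < f x}, G x ∂μ := by
  have hac := withDensity_absolutelyContinuous μ G
  calc ∫⁻ x, ENNReal.ofReal (f x) * G x ∂μ = ∫⁻ x, ENNReal.ofReal (f x) ∂μ.withDensity G := by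
        rw [lintegral_withDensity_eq_lintegral_mul₀ hG hf_meas.ennreal_ofReal]
        simp only [Pi.mul_apply, mul_comm]
    _ = ∫⁻ s in Ioi 0, μ.withDensity G {x | s < f x} :=
        lintegral_eq_lintegral_meas_lt _ (hac.ae_le hf) (hf_meas.mono_ac hac)
    _ = ∫⁻ s in Ioi 0, ∫⁻ x in {x | s < f x}, G x ∂μ := by
        simp only [withDensity_apply']

theorem integral_nonneg_iff_lintegral_ofReal_neg_le {h : α → ℝ} (hh : Integrable h μ) :
    0 ≤ ∫ x, h x ∂μ ↔ ∫⁻ x, ENNReal.ofReal (-h x) ∂μ ≤ ∫⁻ x, ENNReal.ofReal (h x) ∂μ := by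
  rw [integral_eq_lintegral_pos_part_sub_lintegral_neg_part hh, sub_nonneg]
  exact ENNReal.toReal_le_toReal hh.neg.lintegral_lt_top.ne hh.lintegral_lt_top.ne

theorem integral_mul_nonneg_of_setIntegral_superlevel_nonneg [SFinite μ] {f h : α → ℝ}
    (hf : 0 ≤ᵐ[μ] f) (hf_meas : AEMeasurable f μ) (hh : Integrable h μ)
    (hfh : Integrable (fun x => f x * h x) μ)
    (hsuper : ∀ s > 0, 0 ≤ ∫ x in {x | s < f x}, h x ∂μ) :
    0 ≤ ∫ x, f x * h x ∂μ := by
  rw [integral_nonneg_iff_lintegral_ofReal_neg_le hfh]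
  have hpos : ∫⁻ x, ENNReal.ofReal (f x * h x) ∂μ
      = ∫⁻ x, ENNReal.ofReal (f x) * ENNReal.ofReal (h x) ∂μ :=
    lintegral_congr_ae (hf.mono fun x hx => ENNReal.ofReal_mul hx)
  have hneg : ∫⁻ x, ENNReal.ofReal (-(f x * h x)) ∂μ
      = ∫⁻ x, ENNReal.ofReal (f x) * ENNReal.ofReal (-h x) ∂μ :=
    lintegral_congr_ae (hf.mono fun x hx => by simp only [← mul_neg, ENNReal.ofReal_mul hx])
  rw [hpos, hneg, lintegral_ofReal_mul_eq_lintegral_setLIntegral_lt hf hf_meas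
      (G := fun x => ENNReal.ofReal (-h x)) hh.aemeasurable.neg.ennreal_ofReal,
    lintegral_ofReal_mul_eq_lintegral_setLIntegral_lt hf hf_meas hh.aemeasurable.ennreal_ofReal]
  exact setLIntegral_mono' measurableSet_Ioi fun s hs =>
    (integral_nonneg_iff_lintegral_ofReal_neg_le hh.restrict).1 (hsuper s hs)

end LayerCake

theorem MonotoneOn.exists_superlevel_inter_Ioo_ae_eq {p : ℝ → ℝ} {a b : ℝ}
    (hp : MonotoneOn p (Ioo a b)) (hab : a ≤ b) (s : ℝ) :
    ∃ t, a ≤ t ∧ ({x | s < p x} ∩ Ioo a b : Set ℝ) =ᵐ[volume] Ioo t b := by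
  set U : Set ℝ := {x | s < p x} ∩ Ioo a b
  have hbdd : BddBelow (insert b U) := ⟨a, by
    rintro x (rfl | hx)
    exacts [hab, hx.2.1.le]⟩
  refine ⟨sInf (insert b U), le_csInf (insert_nonempty b U) ?_, ?_⟩
  · rintro x (rfl | hx)
    exacts [hab, hx.2.1.le]
  have hIoo : Ioo (sInf (insert b U)) b ⊆ U := by
    intro y hy
    obtain ⟨x, hx, hxy⟩ := exists_lt_of_csInf_lt (insert_nonempty b U) hy.1
    rcases hx with rfl | ⟨hsx, hxI⟩
    · exact absurd hy.2 hxy.not_gt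
    have hyI : y ∈ Ioo a b := ⟨hxI.1.trans hxy, hy.2⟩
    exact ⟨hsx.trans_le (hp hxI hyI hxy.le), hyI⟩
  have hIco : U ⊆ Ico (sInf (insert b U)) b := fun x hx =>
    ⟨csInf_le hbdd (mem_insert_of_mem b hx), hx.2.2⟩
  exact (hIco.eventuallyLE.trans Ioo_ae_eq_Ico.symm.le).antisymm hIoo.eventuallyLE

theorem integral_mul_nonneg_of_monotoneOn {p h : ℝ → ℝ} {a b : ℝ} (hab : a ≤ b)
    (hp_nonneg : ∀ x ∈ Ioo a b, 0 ≤ p x) (hp : MonotoneOn p (Ioo a b))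
    (hh : IntegrableOn h (Ioo a b)) (hph : IntegrableOn (fun x => p x * h x) (Ioo a b))
    (htail : ∀ t ∈ Ico a b, 0 ≤ ∫ x in Ioo t b, h x) :
    0 ≤ ∫ x in Ioo a b, p x * h x := by
  refine integral_mul_nonneg_of_setIntegral_superlevel_nonneg
    ((ae_restrict_iff' measurableSet_Ioo).2 (ae_of_all _ hp_nonneg))
    (aemeasurable_restrict_of_monotoneOn measurableSet_Ioo hp) hh hph fun s _ => ?_
  obtain ⟨t, hat, ht⟩ := hp.exists_superlevel_inter_Ioo_ae_eq hab s
  rw [Measure.restrict_restrict' measurableSet_Ioo, setIntegral_congr_set ht]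
  rcases lt_or_ge t b with htb | htb
  · exact htail t ⟨hat, htb⟩
  · simp [Ioo_eq_empty htb.not_gt]

theorem integral_Ioo_add_integral_Ioo {f : ℝ → ℝ} {a b c : ℝ} (hab : a ≤ b) (hbc : b ≤ c)
    (hf : IntegrableOn f (Ioo a c)) :
    (∫ x in Ioo a b, f x) + ∫ x in Ioo b c, f x = ∫ x in Ioo a c, f x := by
  have hfab : IntervalIntegrable f volume a b :=
    (intervalIntegrable_iff_integrableOn_Ioo_of_le hab).2 (hf.mono_set (Ioo_subset_Ioo le_rfl hbc))
  have hfbc : IntervalIntegrable f volume b c :=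
    (intervalIntegrable_iff_integrableOn_Ioo_of_le hbc).2 (hf.mono_set (Ioo_subset_Ioo hab le_rfl))
  simp only [← integral_Ioc_eq_integral_Ioo, ← intervalIntegral.integral_of_le hab,
    ← intervalIntegral.integral_of_le hbc, ← intervalIntegral.integral_of_le (hab.trans hbc)]
  exact intervalIntegral.integral_add_adjacent_intervals hfab hfbc

theorem integral_Ioo_id_mul (a b c : ℝ) (hab : a ≤ b) :
    ∫ x in Ioo a b, x * c = (b ^ 2 - a ^ 2) / 2 * c := by
  rw [← integral_Ioc_eq_integral_Ioo, ← intervalIntegral.integral_of_le hab,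
    intervalIntegral.integral_mul_const, integral_id]

theorem integrableOn_Ioo_id_mul (a b c : ℝ) : IntegrableOn (fun x => x * c) (Ioo a b) :=
  (continuous_id.mul continuous_const).integrableOn_Icc.mono_set Ioo_subset_Icc_self

theorem integral_Ioo_comp_sub_left {f : ℝ → ℝ} {a b : ℝ} (hab : a ≤ b) (d : ℝ) :
    ∫ x in Ioo a b, f (d - x) = ∫ x in Ioo (d - b) (d - a), f x := by
  rw [← integral_Ioc_eq_integral_Ioo, ← integral_Ioc_eq_integral_Ioo,
    ← intervalIntegral.integral_of_le hab,
    ← intervalIntegral.integral_of_le (by linarith : d - b ≤ d - a)]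
  exact intervalIntegral.integral_comp_sub_left f d

theorem ConcaveOn.mul_apply_le_mul_apply {ψ : ℝ → ℝ} {a b c : ℝ}
    (hψ : ConcaveOn ℝ (Ioo 0 c) ψ) (hψ_nonneg : ∀ x ∈ Ioo 0 c, 0 ≤ ψ x)
    (ha : 0 < a) (hab : a ≤ b) (hbc : b < c) : a * ψ b ≤ b * ψ a := by
  -- concavity on the chord from `ε` to `b`, then `ε → 0`
  have hchord : ∀ ε ∈ Ioo 0 a, (a - ε) * ψ b ≤ (b - ε) * ψ a := by
    rintro ε ⟨hε, hεa⟩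
    have hbε : 0 < b - ε := by linarith
    have hmem : ε ∈ Ioo 0 c := ⟨hε, by linarith⟩
    have hconc := hψ.2 ⟨ha.trans_le hab, hbc⟩ hmem
      (div_nonneg (by linarith : 0 ≤ a - ε) hbε.le) (div_nonneg (by linarith : 0 ≤ b - a) hbε.le)
      (by rw [← add_div, div_eq_one_iff_eq hbε.ne']; ring)
    have hcomb : ((a - ε) / (b - ε)) • b + ((b - a) / (b - ε)) • ε = a := by
      simp only [smul_eq_mul]; field_simp; ring
    rw [hcomb, smul_eq_mul, smul_eq_mul, div_mul_eq_mul_div, div_mul_eq_mul_div,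
      ← add_div, div_le_iff₀ hbε] at hconc
    nlinarith [hψ_nonneg ε hmem]
  have hleft : Tendsto (fun ε => (a - ε) * ψ b) (𝓝[>] 0) (𝓝 (a * ψ b)) :=
    tendsto_nhdsWithin_of_tendsto_nhds <|
      (by fun_prop : Continuous fun ε : ℝ => (a - ε) * ψ b).tendsto' 0 _ (by simp)
  have hright : Tendsto (fun ε => (b - ε) * ψ a) (𝓝[>] 0) (𝓝 (b * ψ a)) :=
    tendsto_nhdsWithin_of_tendsto_nhds <|
      (by fun_prop : Continuous fun ε : ℝ => (b - ε) * ψ a).tendsto' 0 _ (by simp)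
  exact le_of_tendsto_of_tendsto hleft hright
    (eventually_of_mem (Ioo_mem_nhdsGT ha) hchord)

theorem ConcaveOn.sq_mul_integral_le {ψ : ℝ → ℝ} {c t : ℝ}
    (hψ : ConcaveOn ℝ (Ioo 0 c) ψ) (hψ_nonneg : ∀ x ∈ Ioo 0 c, 0 ≤ ψ x)
    (hψ_int : IntegrableOn ψ (Ioo 0 c)) (ht : t ∈ Ico 0 c) :
    t ^ 2 * ∫ x in Ioo 0 c, ψ x ≤ c ^ 2 * ∫ x in Ioo 0 t, ψ x := by
  obtain ⟨ht0, htc⟩ := ht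
  rcases ht0.eq_or_lt with rfl | ht0
  · simp
  have htmem : t ∈ Ioo 0 c := ⟨ht0, htc⟩
  have hsub_left : Ioo 0 t ⊆ Ioo 0 c := Ioo_subset_Ioo le_rfl htc.le
  have hsub_right : Ioo t c ⊆ Ioo 0 c := Ioo_subset_Ioo ht0.le le_rfl
  -- `ψ x / x` is antitone: compare `ψ` with the line through the origin and `(t, ψ t)`
  have hleft : t ^ 2 / 2 * ψ t ≤ t * ∫ x in Ioo 0 t, ψ x := by
    have hline := integral_Ioo_id_mul 0 t (ψ t) ht0.le
    rw [zero_pow two_ne_zero, sub_zero] at hline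
    rw [← integral_const_mul, ← hline]
    refine setIntegral_mono_on (integrableOn_Ioo_id_mul _ _ _)
      ((hψ_int.mono_set hsub_left).const_mul t) measurableSet_Ioo fun x hx => ?_
    exact hψ.mul_apply_le_mul_apply hψ_nonneg hx.1 hx.2.le htc
  have hright : t * ∫ x in Ioo t c, ψ x ≤ (c ^ 2 - t ^ 2) / 2 * ψ t := by
    rw [← integral_const_mul, ← integral_Ioo_id_mul t c _ htc.le]
    refine setIntegral_mono_on ((hψ_int.mono_set hsub_right).const_mul t)
      (integrableOn_Ioo_id_mul _ _ _) measurableSet_Ioo fun x hx => ?_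
    exact hψ.mul_apply_le_mul_apply hψ_nonneg ht0 hx.1.le hx.2
  rw [← integral_Ioo_add_integral_Ioo ht0.le htc.le hψ_int]
  have hψt := hψ_nonneg t htmem
  nlinarith [mul_le_mul_of_nonneg_left hleft (by nlinarith : 0 ≤ c ^ 2 - t ^ 2),
    mul_le_mul_of_nonneg_left hright ht0.le]

theorem integral_mul_le_of_concaveOn_of_monotoneOn {p ψ : ℝ → ℝ} {c : ℝ} (hc : 0 ≤ c)
    (hp_nonneg : ∀ x ∈ Ioo 0 c, 0 ≤ p x) (hp_mono : MonotoneOn p (Ioo 0 c))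
    (hψ : ConcaveOn ℝ (Ioo 0 c) ψ) (hψ_nonneg : ∀ x ∈ Ioo 0 c, 0 ≤ ψ x)
    (hψ_int : IntegrableOn ψ (Ioo 0 c)) (hpψ_int : IntegrableOn (fun x => p x * ψ x) (Ioo 0 c))
    (hxp_int : IntegrableOn (fun x => x * p x) (Ioo 0 c)) :
    c ^ 2 * ∫ x in Ioo 0 c, p x * ψ x ≤ 2 * (∫ x in Ioo 0 c, ψ x) * ∫ x in Ioo 0 c, x * p x := by
  set C := ∫ x in Ioo 0 c, ψ x
  have hh_int : IntegrableOn (fun x => x * (2 * C) - c ^ 2 * ψ x) (Ioo 0 c) :=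
    (integrableOn_Ioo_id_mul _ _ _).sub (hψ_int.const_mul _)
  have hph_int : IntegrableOn (fun x => p x * (x * (2 * C) - c ^ 2 * ψ x)) (Ioo 0 c) :=
    IntegrableOn.congr_fun ((hxp_int.const_mul (2 * C)).sub (hpψ_int.const_mul (c ^ 2)))
      (fun x _ => by simp only [Pi.sub_apply]; ring) measurableSet_Ioo
  have htail : ∀ t ∈ Ico 0 c, 0 ≤ ∫ x in Ioo t c, (x * (2 * C) - c ^ 2 * ψ x) := by
    intro t ht
    have hsub : Ioo t c ⊆ Ioo 0 c := Ioo_subset_Ioo ht.1 le_rfl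
    rw [integral_sub (integrableOn_Ioo_id_mul _ _ _) ((hψ_int.mono_set hsub).const_mul _),
      integral_Ioo_id_mul t c _ ht.2.le, integral_const_mul]
    have hsplit := integral_Ioo_add_integral_Ioo ht.1 ht.2.le hψ_int
    have hconc := hψ.sq_mul_integral_le hψ_nonneg hψ_int ht
    nlinarith
  have hcore := integral_mul_nonneg_of_monotoneOn hc hp_nonneg hp_mono hh_int hph_int htail
  have hexpand : ∫ x in Ioo 0 c, p x * (x * (2 * C) - c ^ 2 * ψ x)
      = 2 * C * (∫ x in Ioo 0 c, x * p x) - c ^ 2 * ∫ x in Ioo 0 c, p x * ψ x := by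
    rw [← integral_const_mul (2 * C), ← integral_const_mul (c ^ 2),
      ← integral_sub (hxp_int.const_mul _) (hpψ_int.const_mul _)]
    exact setIntegral_congr_fun measurableSet_Ioo fun x _ => by ring
  linarith

theorem MeasureTheory.IntegrableOn.comp_one_sub {f : ℝ → ℝ} (hf : IntegrableOn f (Ioo 0 1)) :
    IntegrableOn (fun x => f (1 - x)) (Ioo 0 1) := by
  rw [← intervalIntegrable_iff_integrableOn_Ioo_of_le zero_le_one] at hf ⊢
  simpa only [sub_self, sub_zero] using (hf.comp_sub_left 1).symm

theorem ConcaveOn.comp_one_sub {f : ℝ → ℝ} (hf : ConcaveOn ℝ (Ioo 0 1) f) :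
    ConcaveOn ℝ (Ioo 0 1) (fun x => f (1 - x)) := by
  refine ⟨convex_Ioo 0 1, fun x hx y hy a b ha hb hab => ?_⟩
  have h := hf.2 (x := 1 - x) ⟨by linarith [hx.2], by linarith [hx.1]⟩
    (y := 1 - y) ⟨by linarith [hy.2], by linarith [hy.1]⟩ ha hb hab
  simp only [smul_eq_mul] at h ⊢
  convert h using 2
  linear_combination -hab

theorem integral_Ioo_zero_one_eq_integral_fold {f : ℝ → ℝ} (hf : IntegrableOn f (Ioo 0 1)) :
    ∫ x in Ioo 0 1, f x = ∫ x in Ioo 0 (1 / 2), (f x + f (1 - x)) := by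
  have hsub : Ioo (0 : ℝ) (1 / 2) ⊆ Ioo 0 1 := Ioo_subset_Ioo le_rfl (by norm_num)
  rw [integral_add (hf.mono_set hsub) (hf.comp_one_sub.mono_set hsub),
    integral_Ioo_comp_sub_left (by norm_num) 1,
    ← integral_Ioo_add_integral_Ioo (b := 1 / 2) (by norm_num) (by norm_num) hf]
  norm_num

theorem clausing_general (p φ : ℝ → ℝ)
    (hp_nonneg : ∀ x ∈ Ioo (0:ℝ) 1, 0 ≤ p x)
    (hp_symm : ∀ x ∈ Ioo (0:ℝ) 1, p x = p (1 - x))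
    (hp_mono : MonotoneOn p (Ioo 0 (1/2)))
    (hφ_conc : ConcaveOn ℝ (Ioo 0 1) φ)
    (hφ_pos : ∀ x ∈ Ioo (0:ℝ) 1, 0 < φ x)
    (hφ_int : IntegrableOn φ (Ioo 0 1))
    (hpφ_int : IntegrableOn (fun x => p x * φ x) (Ioo 0 1))
    (hpq_int : IntegrableOn (fun x => 4 * min x (1 - x) * p x) (Ioo 0 1)) :
    ∫ x in Ioo (0:ℝ) 1, p x * φ x ≤
      (∫ x in Ioo (0:ℝ) 1, φ x) * ∫ x in Ioo (0:ℝ) 1, 4 * min x (1 - x) * p x := by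
  have hsub : Ioo (0 : ℝ) (1 / 2) ⊆ Ioo 0 1 := Ioo_subset_Ioo le_rfl (by norm_num)
  set ψ : ℝ → ℝ := fun x => φ x + φ (1 - x)
  have hψ_conc : ConcaveOn ℝ (Ioo 0 (1 / 2)) ψ :=
    (hφ_conc.add hφ_conc.comp_one_sub).subset hsub (convex_Ioo _ _)
  have hψ_nonneg : ∀ x ∈ Ioo (0 : ℝ) (1 / 2), 0 ≤ ψ x := fun x hx =>
    add_nonneg (hφ_pos x (hsub hx)).le (hφ_pos _ ⟨by linarith [hx.2], by linarith [hx.1]⟩).le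
  have hpψ : ∀ x ∈ Ioo (0 : ℝ) (1 / 2), p x * φ x + p (1 - x) * φ (1 - x) = p x * ψ x :=
    fun x hx => by rw [← hp_symm x (hsub hx)]; ring
  have hxp : ∀ x ∈ Ioo (0 : ℝ) (1 / 2),
      4 * min x (1 - x) * p x + 4 * min (1 - x) (1 - (1 - x)) * p (1 - x) = 8 * (x * p x) :=
    fun x hx => by
      rw [← hp_symm x (hsub hx), min_eq_left (by linarith [hx.2]),
        min_eq_right (by linarith [hx.2])]; ring
  have hxp_int : IntegrableOn (fun x => x * p x) (Ioo 0 (1 / 2)) :=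
    IntegrableOn.congr_fun ((hpq_int.mono_set hsub).const_mul (1 / 4))
      (fun x hx => by rw [min_eq_left (by linarith [hx.2])]; ring) measurableSet_Ioo
  have key := integral_mul_le_of_concaveOn_of_monotoneOn (by norm_num)
    (fun x hx => hp_nonneg x (hsub hx)) hp_mono hψ_conc hψ_nonneg
    ((hφ_int.add hφ_int.comp_one_sub).mono_set hsub)
    (((hpφ_int.add hpφ_int.comp_one_sub).mono_set hsub).congr_fun hpψ measurableSet_Ioo) hxp_int
  rw [integral_Ioo_zero_one_eq_integral_fold hpφ_int, setIntegral_congr_fun measurableSet_Ioo hpψ,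
    integral_Ioo_zero_one_eq_integral_fold hφ_int, integral_Ioo_zero_one_eq_integral_fold hpq_int,
    setIntegral_congr_fun measurableSet_Ioo hxp, integral_const_mul]
  linarith

/-- **Clausing's inequality.** If `p` is nonnegative, integrable, symmetric on `(0,1)`
and non-decreasing on `(0, 1/2)`, then for every concave, positive, integrable
function `φ` on `(0,1)` (products assumed integrable),
`∫₀¹ p φ ≤ (∫₀¹ φ) · (∫₀¹ 4 min{x, 1-x} p(x) dx)`. -/
theorem clausing (p φ : ℝ → ℝ)
    (hp_nonneg : ∀ x ∈ Ioo (0:ℝ) 1, 0 ≤ p x)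
    (hp_int : IntegrableOn p (Ioo 0 1))
    (hp_symm : ∀ x ∈ Ioo (0:ℝ) 1, p x = p (1 - x))
    (hp_mono : MonotoneOn p (Ioo 0 (1/2)))
    (hφ_conc : ConcaveOn ℝ (Ioo 0 1) φ)
    (hφ_pos : ∀ x ∈ Ioo (0:ℝ) 1, 0 < φ x)
    (hφ_int : IntegrableOn φ (Ioo 0 1))
    (hpφ_int : IntegrableOn (fun x => p x * φ x) (Ioo 0 1))
    (hpq_int : IntegrableOn (fun x => 4 * min x (1 - x) * p x) (Ioo 0 1)) :
    ∫ x in Ioo (0:ℝ) 1, p x * φ x ≤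
      (∫ x in Ioo (0:ℝ) 1, φ x) * ∫ x in Ioo (0:ℝ) 1, 4 * min x (1 - x) * p x :=
  clausing_general p φ hp_nonneg hp_symm hp_mono hφ_conc hφ_pos hφ_int hpφ_int hpq_int
end

section
/- Let f, g : [a,b] → ℝ (with a < b) be integrable, suppose g is non-decreasing on [a,b], and suppose f belongs to the class M⁺ on [a,b]. Then (1/(b-a)) ∫ₐᵇ f(x)g(x) dx ≥ ((1/(b-a)) ∫ₐᵇ f(x) dx) · ((1/(b-a)) ∫ₐᵇ g(x) dx). -/
open MeasureTheory Set

/-- An integrable function `f : [a,b] → ℝ` belongs to the class `M⁺` if there is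
`c ∈ [a,b]` such that `f x < avg f → x < c` and `f x > avg f → x > c`
(for `x ∈ [a,b]`), where `avg f = (1/(b-a)) ∫ₐᵇ f`. -/
def MemMPlus (f : ℝ → ℝ) (a b : ℝ) : Prop :=
  ∃ c ∈ Icc a b, ∀ x ∈ Icc a b,
    (f x < (1 / (b - a)) * ∫ t in a..b, f t → x < c) ∧
    ((1 / (b - a)) * ∫ t in a..b, f t < f x → c < x)

set_option maxHeartbeats 1000000 in
/-- **Strengthened Chebyshev inequality.** If `f, g` are integrable on `[a,b]` (`a < b`),
`g` is non-decreasing on `[a,b]`, `f ∈ M⁺` and `f·g` is integrable, then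
`(1/(b-a)) ∫ₐᵇ f g ≥ ((1/(b-a)) ∫ₐᵇ f) ((1/(b-a)) ∫ₐᵇ g)`. -/
theorem chebyshev_MPlus_mono (a b : ℝ) (hab : a < b) (f g : ℝ → ℝ)
    (hf_int : IntegrableOn f (Icc a b))
    (hg_int : IntegrableOn g (Icc a b))
    (hfg_int : IntegrableOn (fun x => f x * g x) (Icc a b))
    (hg_mono : MonotoneOn g (Icc a b))
    (hf : MemMPlus f a b) :
    (1 / (b - a)) * ∫ x in a..b, f x * g x ≥
      ((1 / (b - a)) * ∫ x in a..b, f x) * ((1 / (b - a)) * ∫ x in a..b, g x) := by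
  obtain ⟨c, hc, hprop⟩ := hf
  have hab' : a ≤ b := hab.le
  have hpos : (0:ℝ) < b - a := by linarith
  set μ : ℝ := (1 / (b - a)) * ∫ t in a..b, f t with hμ
  have huIcc : uIcc a b = Icc a b := uIcc_of_le hab'
  rw [← huIcc] at hf_int hg_int hfg_int
  have hfI : IntervalIntegrable f volume a b := hf_int.intervalIntegrable
  have hgI : IntervalIntegrable g volume a b := hg_int.intervalIntegrable
  have hfgI : IntervalIntegrable (fun x => f x * g x) volume a b := hfg_int.intervalIntegrable
  rw [huIcc] at hf_int hg_int hfg_int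
  -- pointwise nonnegativity
  have hpt : ∀ x ∈ Icc a b, 0 ≤ (f x - μ) * (g x - g c) := by
    intro x hx
    rcases lt_trichotomy (f x) μ with h | h | h
    · have hxc : x < c := (hprop x hx).1 h
      have hg : g x ≤ g c := hg_mono hx hc hxc.le
      nlinarith
    · simp [h]
    · have hxc : c < x := (hprop x hx).2 h
      have hg : g c ≤ g x := hg_mono hc hx hxc.le
      exact mul_nonneg (by linarith) (by linarith)
  have hint : 0 ≤ ∫ x in a..b, (f x - μ) * (g x - g c) :=
    intervalIntegral.integral_nonneg hab' hpt
  -- expand the integral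
  have hexp : (∫ x in a..b, (f x - μ) * (g x - g c))
      = (∫ x in a..b, f x * g x) - μ * (∫ x in a..b, g x)
        - g c * (∫ x in a..b, f x) + (b - a) * (μ * g c) := by
    have h1 : IntervalIntegrable (fun x => μ * g x) volume a b := hgI.const_mul μ
    have h2 : IntervalIntegrable (fun x => g c * f x) volume a b := hfI.const_mul (g c)
    have h3 : IntervalIntegrable (fun _ : ℝ => μ * g c) volume a b :=
      intervalIntegrable_const
    have heq : ∀ x, (f x - μ) * (g x - g c)
        = f x * g x - μ * g x - g c * f x + μ * g c := by intro x; ring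
    calc (∫ x in a..b, (f x - μ) * (g x - g c))
        = ∫ x in a..b, (f x * g x - μ * g x - g c * f x + μ * g c) := by
          simp only [heq]
      _ = (∫ x in a..b, f x * g x) - (∫ x in a..b, μ * g x)
            - (∫ x in a..b, g c * f x) + ∫ x in a..b, (μ * g c : ℝ) := by
          rw [intervalIntegral.integral_add ((hfgI.sub h1).sub h2) h3,
            intervalIntegral.integral_sub (hfgI.sub h1) h2,
            intervalIntegral.integral_sub hfgI h1]
      _ = (∫ x in a..b, f x * g x) - μ * (∫ x in a..b, g x)
            - g c * (∫ x in a..b, f x) + (b - a) * (μ * g c) := by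
          rw [intervalIntegral.integral_const_mul, intervalIntegral.integral_const_mul,
            intervalIntegral.integral_const]
          simp [smul_eq_mul]
  have hfint : (∫ x in a..b, f x) = (b - a) * μ := by
    rw [hμ]; field_simp
  rw [hexp, hfint] at hint
  have key : μ * (∫ x in a..b, g x) ≤ ∫ x in a..b, f x * g x := by nlinarith
  have hinv : (0:ℝ) ≤ 1 / (b - a) := by positivity
  have := mul_le_mul_of_nonneg_left key hinv
  calc ((1 / (b - a)) * ∫ x in a..b, f x) * ((1 / (b - a)) * ∫ x in a..b, g x)
      = (1 / (b - a)) * (μ * ∫ x in a..b, g x) := by rw [hμ]; ring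
    _ ≤ (1 / (b - a)) * ∫ x in a..b, f x * g x := this
end

section
/- Let f, g : [a,b] → ℝ (with a < b) be integrable, suppose g is non-increasing on [a,b], and suppose f belongs to the class M⁻ on [a,b]. Then (1/(b-a)) ∫ₐᵇ f(x)g(x) dx ≥ ((1/(b-a)) ∫ₐᵇ f(x) dx) · ((1/(b-a)) ∫ₐᵇ g(x) dx). -/
open MeasureTheory Set

def MemMMinus (f : ℝ → ℝ) (a b : ℝ) : Prop :=
  ∃ c ∈ Icc a b, ∀ x ∈ Icc a b,
    (f x < (1 / (b - a)) * ∫ t in a..b, f t → c < x) ∧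
    ((1 / (b - a)) * ∫ t in a..b, f t < f x → x < c)

/-!
With `A` the mean of `f` and `c` the point of the class `M⁻`, the integrand
`(f x - A) * (g x - g c)` is nonnegative: `f x - A` can only be negative to the right of `c`,
where `g x ≤ g c`, and only positive to the left of `c`, where `g x ≥ g c`. Since `f - A` has
integral zero, the integral of this product is `∫ f g - A ∫ g`.
-/

lemma sub_mul_sub_nonneg_of_antitoneOn {f g : ℝ → ℝ} {s : Set ℝ} {A c x : ℝ}
    (hc : c ∈ s) (hx : x ∈ s) (hg : AntitoneOn g s)
    (hf : (f x < A → c < x) ∧ (A < f x → x < c)) :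
    0 ≤ (f x - A) * (g x - g c) := by
  rcases lt_trichotomy (f x) A with hlt | heq | hgt
  · have : g x ≤ g c := hg hc hx (hf.1 hlt).le
    exact mul_nonneg_of_nonpos_of_nonpos (by linarith) (by linarith)
  · simp [heq]
  · have : g c ≤ g x := hg hx hc (hf.2 hgt).le
    exact mul_nonneg (by linarith) (by linarith)

lemma interval_mean_mul_length (f : ℝ → ℝ) (a b : ℝ) :
    ((1 / (b - a)) * ∫ t in a..b, f t) * (b - a) = ∫ t in a..b, f t := by
  rcases eq_or_ne a b with rfl | hab
  · simp
  · field_simp [sub_ne_zero.2 hab.symm]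

lemma integral_sub_mean_mul_sub_const {f g : ℝ → ℝ} {a b : ℝ}
    (hf : IntervalIntegrable f volume a b) (hg : IntervalIntegrable g volume a b)
    (hfg : IntervalIntegrable (fun x => f x * g x) volume a b) (k : ℝ) :
    let A := (1 / (b - a)) * ∫ t in a..b, f t
    ∫ x in a..b, (f x - A) * (g x - k) = (∫ x in a..b, f x * g x) - A * ∫ x in a..b, g x := by
  intro A
  have hkf : IntervalIntegrable (fun x => k * f x) volume a b := hf.const_mul k
  have hAg : IntervalIntegrable (fun x => A * g x) volume a b := hg.const_mul A
  have hexpand : (fun x => (f x - A) * (g x - k))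
      = fun x => f x * g x - k * f x - A * g x + A * k := by
    funext x; ring
  rw [hexpand, intervalIntegral.integral_add ((hfg.sub hkf).sub hAg) intervalIntegrable_const,
    intervalIntegral.integral_sub (hfg.sub hkf) hAg, intervalIntegral.integral_sub hfg hkf,
    intervalIntegral.integral_const_mul, intervalIntegral.integral_const_mul,
    intervalIntegral.integral_const, smul_eq_mul, ← interval_mean_mul_length f a b]
  ring

/-- **Strengthened Chebyshev inequality.** If `f, g` are integrable on `[a,b]` (`a < b`),
`g` is non-increasing on `[a,b]`, `f ∈ M⁻` and `f·g` is integrable, then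
`(1/(b-a)) ∫ₐᵇ f g ≥ ((1/(b-a)) ∫ₐᵇ f) ((1/(b-a)) ∫ₐᵇ g)`. -/
theorem chebyshev_MMinus_anti (a b : ℝ) (hab : a < b) (f g : ℝ → ℝ)
    (hf_int : IntegrableOn f (Icc a b))
    (hg_int : IntegrableOn g (Icc a b))
    (hfg_int : IntegrableOn (fun x => f x * g x) (Icc a b))
    (hg_anti : AntitoneOn g (Icc a b))
    (hf : MemMMinus f a b) :
    (1 / (b - a)) * ∫ x in a..b, f x * g x ≥
      ((1 / (b - a)) * ∫ x in a..b, f x) * ((1 / (b - a)) * ∫ x in a..b, g x) := by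
  obtain ⟨c, hc, hcf⟩ := hf
  rw [← uIcc_of_le hab.le] at hf_int hg_int hfg_int
  set A := (1 / (b - a)) * ∫ t in a..b, f t
  have hnonneg : 0 ≤ ∫ x in a..b, (f x - A) * (g x - g c) :=
    intervalIntegral.integral_nonneg hab.le fun x hx =>
      sub_mul_sub_nonneg_of_antitoneOn hc hx hg_anti (hcf x hx)
  rw [integral_sub_mean_mul_sub_const hf_int.intervalIntegrable hg_int.intervalIntegrable
    hfg_int.intervalIntegrable] at hnonneg
  have hlen : 0 ≤ 1 / (b - a) := one_div_nonneg.2 (sub_nonneg.2 hab.le)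
  nlinarith [mul_le_mul_of_nonneg_left (sub_nonneg.1 hnonneg) hlen]
end

section
/- Let f, g : [a,b] → ℝ (with a < b) be integrable, suppose g is non-decreasing on [a,b], and suppose f belongs to the class M⁻ on [a,b]. Then (1/(b-a)) ∫ₐᵇ f(x)g(x) dx ≤ ((1/(b-a)) ∫ₐᵇ f(x) dx) · ((1/(b-a)) ∫ₐᵇ g(x) dx). -/
open MeasureTheory Set

/-- **Strengthened Chebyshev inequality (reversed).** If `f, g` are integrable on `[a,b]`
(`a < b`), `g` is non-decreasing on `[a,b]`, `f ∈ M⁻` and `f·g` is integrable, then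
`(1/(b-a)) ∫ₐᵇ f g ≤ ((1/(b-a)) ∫ₐᵇ f) ((1/(b-a)) ∫ₐᵇ g)`. -/
theorem chebyshev_MMinus_mono (a b : ℝ) (hab : a < b) (f g : ℝ → ℝ)
    (hf_int : IntegrableOn f (Icc a b))
    (hg_int : IntegrableOn g (Icc a b))
    (hfg_int : IntegrableOn (fun x => f x * g x) (Icc a b))
    (hg_mono : MonotoneOn g (Icc a b))
    (hf : MemMMinus f a b) :
    (1 / (b - a)) * ∫ x in a..b, f x * g x ≤
      ((1 / (b - a)) * ∫ x in a..b, f x) * ((1 / (b - a)) * ∫ x in a..b, g x) := by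

  obtain ⟨c, hc, hspec⟩ := hf
  set A := (1 / (b - a)) * ∫ t in a..b, f t with hA
  have hba : (0:ℝ) < b - a := by linarith
  have hf_ii : IntervalIntegrable f volume a b := by
    rw [intervalIntegrable_iff_integrableOn_Icc_of_le hab.le]; exact hf_int
  have hg_ii : IntervalIntegrable g volume a b := by
    rw [intervalIntegrable_iff_integrableOn_Icc_of_le hab.le]; exact hg_int
  have hfg_ii : IntervalIntegrable (fun x => f x * g x) volume a b := by
    rw [intervalIntegrable_iff_integrableOn_Icc_of_le hab.le]; exact hfg_int
  have key : (∫ x in a..b, (f x - A) * (g x - g c)) ≤ 0 := by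
    rw [intervalIntegral.integral_of_le hab.le]
    apply setIntegral_nonpos measurableSet_Ioc
    intro x hx'
    have hx : x ∈ Icc a b := Ioc_subset_Icc_self hx' 
    rcases lt_trichotomy (f x) A with h | h | h
    · have hcx := (hspec x hx).1 h
      have hgc := hg_mono hc hx hcx.le
      nlinarith
    · rw [h]; simp
    · have hxc := (hspec x hx).2 h
      have hgc := hg_mono hx hc hxc.le
      nlinarith
  have hintf : (∫ x in a..b, f x) = (b - a) * A := by
    rw [hA]; field_simp
  have expand : (∫ x in a..b, (f x - A) * (g x - g c))
      = (∫ x in a..b, f x * g x) - A * (∫ x in a..b, g x)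
        - g c * (∫ x in a..b, f x) + (b - a) * (A * g c) := by
    have heq : ∀ x, (f x - A) * (g x - g c)
        = (f x * g x - A * g x - g c * f x) + A * g c := by intro x; ring
    simp_rw [heq]
    rw [intervalIntegral.integral_add
        ((hfg_ii.sub (hg_ii.const_mul A)).sub (hf_ii.const_mul (g c)))
        intervalIntegrable_const,
      intervalIntegral.integral_sub (hfg_ii.sub (hg_ii.const_mul A))
        (hf_ii.const_mul (g c)),
      intervalIntegral.integral_sub hfg_ii (hg_ii.const_mul A),
      intervalIntegral.integral_const_mul, intervalIntegral.integral_const_mul,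
      intervalIntegral.integral_const, smul_eq_mul]
  have h1 : (∫ x in a..b, f x * g x) ≤ A * ∫ x in a..b, g x := by
    rw [expand, hintf] at key; nlinarith
  calc (1 / (b - a)) * ∫ x in a..b, f x * g x
      ≤ (1 / (b - a)) * (A * ∫ x in a..b, g x) :=
        mul_le_mul_of_nonneg_left h1 (by positivity)
    _ = A * ((1 / (b - a)) * ∫ x in a..b, g x) := by ring
end

section
/- Let f, g : [a,b] → ℝ (with a < b) be integrable, suppose g is non-increasing on [a,b], and suppose f belongs to the class M⁺ on [a,b]. Then (1/(b-a)) ∫ₐᵇ f(x)g(x) dx ≤ ((1/(b-a)) ∫ₐᵇ f(x) dx) · ((1/(b-a)) ∫ₐᵇ g(x) dx). -/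
open MeasureTheory Set

/-- **Strengthened Chebyshev inequality (reversed).** If `f, g` are integrable on `[a,b]`
(`a < b`), `g` is non-increasing on `[a,b]`, `f ∈ M⁺` and `f·g` is integrable, then
`(1/(b-a)) ∫ₐᵇ f g ≤ ((1/(b-a)) ∫ₐᵇ f) ((1/(b-a)) ∫ₐᵇ g)`. -/
theorem chebyshev_MPlus_anti (a b : ℝ) (hab : a < b) (f g : ℝ → ℝ)
    (hf_int : IntegrableOn f (Icc a b))
    (hg_int : IntegrableOn g (Icc a b))
    (hfg_int : IntegrableOn (fun x => f x * g x) (Icc a b))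
    (hg_anti : AntitoneOn g (Icc a b))
    (hf : MemMPlus f a b) :
    (1 / (b - a)) * ∫ x in a..b, f x * g x ≤
      ((1 / (b - a)) * ∫ x in a..b, f x) * ((1 / (b - a)) * ∫ x in a..b, g x) := by
  obtain ⟨c, hc, hcc⟩ := hf
  have hab' : a ≤ b := hab.le
  have hba : (0:ℝ) < b - a := sub_pos.mpr hab
  set μ : ℝ := (1 / (b - a)) * ∫ t in a..b, f t with hμ
  set γ : ℝ := g c with hγ
  have If : IntervalIntegrable f volume a b :=
    (intervalIntegrable_iff_integrableOn_Ioc_of_le hab').mpr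
      (hf_int.mono_set Ioc_subset_Icc_self)
  have Ig : IntervalIntegrable g volume a b :=
    (intervalIntegrable_iff_integrableOn_Ioc_of_le hab').mpr
      (hg_int.mono_set Ioc_subset_Icc_self)
  have Ifg : IntervalIntegrable (fun x => f x * g x) volume a b :=
    (intervalIntegrable_iff_integrableOn_Ioc_of_le hab').mpr
      (hfg_int.mono_set Ioc_subset_Icc_self)
  -- pointwise inequality
  have hpt : ∀ x ∈ Icc a b, (0:ℝ) ≤ -((f x - μ) * (g x - γ)) := by
    intro x hx
    rcases lt_trichotomy (f x) μ with h | h | h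
    · have hxc : x < c := (hcc x hx).1 h
      have hg : γ ≤ g x := hg_anti hx hc hxc.le
      nlinarith
    · simp [h]
    · have hxc : c < x := (hcc x hx).2 h
      have hg : g x ≤ γ := hg_anti hc hx hxc.le
      nlinarith
  have key : ∫ x in a..b, (f x - μ) * (g x - γ) ≤ 0 := by
    have h0 : 0 ≤ ∫ x in a..b, -((f x - μ) * (g x - γ)) :=
      intervalIntegral.integral_nonneg hab' hpt
    rw [intervalIntegral.integral_neg] at h0
    linarith
  -- expand the integral
  have expand : ∫ x in a..b, (f x - μ) * (g x - γ)
      = (∫ x in a..b, f x * g x) - γ * (∫ x in a..b, f x)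
        - (μ * (∫ x in a..b, g x) - (b - a) * (μ * γ)) := by
    have heq : (fun x => (f x - μ) * (g x - γ))
        = fun x => (f x * g x - γ * f x) - (μ * g x - μ * γ) := by
      funext x; ring
    rw [heq,
      intervalIntegral.integral_sub (Ifg.sub (If.const_mul γ))
        ((Ig.const_mul μ).sub intervalIntegrable_const),
      intervalIntegral.integral_sub Ifg (If.const_mul γ),
      intervalIntegral.integral_sub (Ig.const_mul μ) intervalIntegrable_const,
      intervalIntegral.integral_const_mul, intervalIntegral.integral_const_mul,
      intervalIntegral.integral_const]
    simp [smul_eq_mul]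
  have hμf : ∫ t in a..b, f t = (b - a) * μ := by
    rw [hμ]; field_simp
  have hfin : ∫ x in a..b, f x * g x ≤ μ * ∫ x in a..b, g x := by
    rw [expand, hμf] at key
    nlinarith
  have hpos : (0:ℝ) < 1 / (b - a) := by positivity
  calc (1 / (b - a)) * ∫ x in a..b, f x * g x
      ≤ (1 / (b - a)) * (μ * ∫ x in a..b, g x) :=
        mul_le_mul_of_nonneg_left hfin hpos.le
    _ = μ * ((1 / (b - a)) * ∫ x in a..b, g x) := by ring
end

section
/- Let p, q : (0,1) → ℝ be nonnegative integrable functions such that: p and q are symmetric (p(x) = p(1-x) and q(x) = q(1-x) for all x ∈ (0,1)); p is non-decreasing on (0, 1/2]; q is convex on (0, 1/2]; q(x) → 0 as x → 0⁺ (with q extended by q(0) = 0); and ∫₀¹ q(x) dx = 1. Let φ : [0,1] → ℝ be concave, integrable, symmetric (φ(x) = φ(1-x)), and satisfy φ(0) ≥ 0. Then, writing K = ∫₀¹ φ(x) dx, one has 0 ≤ ∫₀^{1/2} (K·q(x) − φ(x))·p(x) dx, i.e. ∫₀¹ p(x)φ(x) dx ≤ K · ∫₀¹ p(x)q(x) dx.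 -/
/-!
On `(0, 1/2]` put `g = K q - φ`. Convexity of `q` with `q(0⁺) = 0` and concavity of `φ` with
`φ(0) ≥ 0` give `g(t x) ≤ t g(x)` for `t ∈ (0, 1]`, so `g` changes sign at most once, from
negative to positive. Hence for a threshold value `M` of the monotone `p` we have
`g (p - M) ≥ 0` pointwise, while symmetry gives `∫₀^{1/2} g = K/2 - K/2 = 0`; therefore
`∫₀^{1/2} g p = ∫₀^{1/2} g (p - M) ≥ 0`. Symmetry of `p φ` and `p q` doubles this to `(0, 1)`.
-/

open MeasureTheory Set Filter Topology

lemma setIntegral_Ioo_eq_two_mul_of_symm {F : ℝ → ℝ} {a b : ℝ} (hab : a ≤ b)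
    (hF : IntegrableOn F (Ioo a b)) (hsymm : ∀ x ∈ Ioo a b, F (a + b - x) = F x) :
    ∫ x in Ioo a b, F x = 2 * ∫ x in Ioo a ((a + b) / 2), F x := by
  set m := (a + b) / 2
  have ham : a ≤ m := by simp only [m]; linarith
  have hmb : m ≤ b := by simp only [m]; linarith
  have hIoo : ∀ {c d : ℝ} (f : ℝ → ℝ), c ≤ d → ∫ x in Ioo c d, f x = ∫ x in c..d, f x :=
    fun f h => by rw [intervalIntegral.integral_of_le h, integral_Ioc_eq_integral_Ioo]
  have hint : ∀ {c d : ℝ}, a ≤ c → c ≤ d → d ≤ b → IntervalIntegrable F volume c d :=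
    fun hac hcd hdb => (intervalIntegrable_iff_integrableOn_Ioo_of_le hcd).2
      (hF.mono_set (Ioo_subset_Ioo hac hdb))
  have hreflect : ∫ x in m..b, F x = ∫ x in a..m, F x := calc
    ∫ x in m..b, F x = ∫ x in m..b, F (a + b - x) := by
      rw [← hIoo _ hmb, ← hIoo _ hmb]
      exact setIntegral_congr_fun measurableSet_Ioo fun x hx =>
        (hsymm x ⟨ham.trans_lt hx.1, hx.2⟩).symm
    _ = ∫ x in a..m, F x := by
      rw [intervalIntegral.integral_comp_sub_left]
      congr 1 <;> ring
  rw [hIoo _ hab, hIoo _ ham, ← intervalIntegral.integral_add_adjacent_intervals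
    (hint le_rfl ham hmb) (hint ham hmb le_rfl), hreflect]
  ring

lemma setIntegral_Ioo_zero_one_eq_two_mul_of_symm {F : ℝ → ℝ} (hF : IntegrableOn F (Ioo 0 1))
    (hsymm : ∀ x ∈ Ioo (0 : ℝ) 1, F x = F (1 - x)) :
    ∫ x in Ioo (0 : ℝ) 1, F x = 2 * ∫ x in Ioo (0 : ℝ) (1 / 2), F x := by
  simpa using setIntegral_Ioo_eq_two_mul_of_symm zero_le_one hF
    fun x hx => by simpa using (hsymm x hx).symm

lemma ConcaveOn.mul_le_map_smul {E : Type*} [AddCommGroup E] [Module ℝ E] {s : Set E}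
    {φ : E → ℝ} (hφ : ConcaveOn ℝ s φ) (h0 : (0 : E) ∈ s) (hφ0 : 0 ≤ φ 0) {x : E} (hx : x ∈ s)
    {t : ℝ} (ht0 : 0 ≤ t) (ht1 : t ≤ 1) : t * φ x ≤ φ (t • x) := by
  have h := hφ.2 hx h0 ht0 (sub_nonneg.2 ht1) (add_sub_cancel t 1)
  simp only [smul_zero, add_zero, smul_eq_mul] at h
  linarith [mul_nonneg (sub_nonneg.2 ht1) hφ0]

lemma ConvexOn.map_mul_le_mul_of_tendsto_zero {q : ℝ → ℝ} {a x t : ℝ}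
    (hq : ConvexOn ℝ (Ioc 0 a) q) (hq0 : Tendsto q (𝓝[>] 0) (𝓝 0))
    (hx : x ∈ Ioc 0 a) (ht : t ∈ Ioc (0 : ℝ) 1) : q (t * x) ≤ t * q x := by
  have hx0 := hx.1
  set s : ℝ → ℝ := fun ε => (x - t * x) / (x - ε)
  have hs : Tendsto s (𝓝[>] 0) (𝓝 (1 - t)) := by
    have : Tendsto s (𝓝 0) (𝓝 ((x - t * x) / (x - 0))) :=
      tendsto_const_nhds.div (tendsto_const_nhds.sub tendsto_id) (by simpa using hx0.ne')
    convert this.mono_left nhdsWithin_le_nhds using 2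
    field_simp
    ring
  have hlim : Tendsto (fun ε => s ε * q ε + (1 - s ε) * q x) (𝓝[>] 0) (𝓝 (t * q x)) := by
    convert (hs.mul hq0).add ((tendsto_const_nhds.sub hs).mul
      (tendsto_const_nhds (x := q x))) using 2
    ring
  refine ge_of_tendsto hlim ?_
  filter_upwards [Ioo_mem_nhdsGT (mul_pos ht.1 hx0)] with ε hε
  have hεx : ε < x := hε.2.trans_le (mul_le_of_le_one_left hx0.le ht.2)
  have hs0 : 0 ≤ s ε := div_nonneg (by nlinarith [ht.2]) (by linarith)
  have hs1 : s ε ≤ 1 := (div_le_one (by linarith)).2 (by linarith [hε.2])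
  have hcomb : s ε * ε + (1 - s ε) * x = t * x := by
    have : x - ε ≠ 0 := (sub_pos.2 hεx).ne'
    simp only [s]
    field_simp
    ring
  simpa only [smul_eq_mul, hcomb] using
    hq.2 ⟨hε.1, hεx.le.trans hx.2⟩ hx hs0 (sub_nonneg.2 hs1) (add_sub_cancel _ _)

lemma map_mul_le_mul_of_convexOn_of_concaveOn {q φ : ℝ → ℝ} {a K x t : ℝ} (hK : 0 ≤ K)
    (hq : ConvexOn ℝ (Ioc 0 a) q) (hq0 : Tendsto q (𝓝[>] 0) (𝓝 0))
    (hφ : ConcaveOn ℝ (Icc 0 a) φ) (hφ0 : 0 ≤ φ 0) (hx : x ∈ Ioc 0 a) (ht : t ∈ Ioc (0 : ℝ) 1) :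
    K * q (t * x) - φ (t * x) ≤ t * (K * q x - φ x) := by
  have hqt := mul_le_mul_of_nonneg_left (hq.map_mul_le_mul_of_tendsto_zero hq0 hx ht) hK
  have hφt := hφ.mul_le_map_smul (left_mem_Icc.2 (hx.1.le.trans hx.2)) hφ0
    (Ioc_subset_Icc_self hx) ht.1.le ht.2
  rw [smul_eq_mul] at hφt
  linarith

lemma le_of_map_neg_of_map_pos {g : ℝ → ℝ} {a : ℝ}
    (hg : ∀ x ∈ Ioc 0 a, ∀ t ∈ Ioc (0 : ℝ) 1, g (t * x) ≤ t * g x) {x y : ℝ}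
    (hx : x ∈ Ioc 0 a) (hy : 0 < y) (hgx : g x < 0) (hgy : 0 < g y) : x ≤ y := by
  by_contra! hyx
  have ht : y / x ∈ Ioc (0 : ℝ) 1 := ⟨div_pos hy hx.1, (div_le_one hx.1).2 hyx.le⟩
  have h := hg x hx _ ht
  rw [div_mul_cancel₀ y hx.1.ne'] at h
  linarith [mul_neg_of_pos_of_neg ht.1 hgx]

lemma exists_forall_mul_sub_nonneg {α : Type*} [Preorder α] {s : Set α} {a : α} {g p : α → ℝ}
    (ha : IsGreatest s a) (hp : MonotoneOn p s) (hp0 : ∀ x ∈ s, 0 ≤ p x)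
    (hg : ∀ x ∈ s, ∀ y ∈ s, g x < 0 → 0 < g y → x ≤ y) :
    ∃ M, ∀ x ∈ s, 0 ≤ g x * (p x - M) := by
  by_cases hpos : ∃ y ∈ s, 0 < g y
  · obtain ⟨y₀, hy₀, hgy₀⟩ := hpos
    set P := p '' {y ∈ s | 0 < g y}
    have hPbdd : BddBelow P := ⟨0, by rintro _ ⟨y, hy, rfl⟩; exact hp0 y hy.1⟩
    refine ⟨sInf P, fun x hx => ?_⟩
    rcases lt_trichotomy (g x) 0 with hneg | hzero | hpos
    · have : p x ≤ sInf P := le_csInf ⟨_, y₀, ⟨hy₀, hgy₀⟩, rfl⟩ <| by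
        rintro _ ⟨y, hy, rfl⟩
        exact hp hx hy.1 (hg x hx y hy.1 hneg hy.2)
      exact mul_nonneg_of_nonpos_of_nonpos hneg.le (sub_nonpos.2 this)
    · simp [hzero]
    · exact mul_nonneg hpos.le (sub_nonneg.2 (csInf_le hPbdd ⟨x, ⟨hx, hpos⟩, rfl⟩))
  · push Not at hpos
    exact ⟨p a, fun x hx =>
      mul_nonneg_of_nonpos_of_nonpos (hpos x hx) (sub_nonpos.2 (hp hx ha.1 (ha.2 hx)))⟩

lemma setIntegral_mul_nonneg_of_integral_eq_zero {α : Type*} [MeasurableSpace α]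
    {μ : Measure α} {s : Set α} (hs : MeasurableSet s) {g p : α → ℝ} {M : ℝ}
    (hg : IntegrableOn g s μ) (hgp : IntegrableOn (fun x => g x * p x) s μ)
    (hg0 : ∫ x in s, g x ∂μ = 0) (hM : ∀ x ∈ s, 0 ≤ g x * (p x - M)) :
    0 ≤ ∫ x in s, g x * p x ∂μ := by
  have h : ∫ x in s, g x * p x ∂μ = ∫ x in s, g x * (p x - M) ∂μ := by
    simp_rw [mul_sub]
    rw [integral_sub hgp (hg.mul_const M), integral_mul_const, hg0]
    ring
  rw [h]
  exact setIntegral_nonneg hs hM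

lemma setIntegral_mul_nonneg_of_map_mul_le {g p : ℝ → ℝ} {a : ℝ} (ha : 0 < a)
    (hg : ∀ x ∈ Ioc 0 a, ∀ t ∈ Ioc (0 : ℝ) 1, g (t * x) ≤ t * g x)
    (hp : MonotoneOn p (Ioc 0 a)) (hp0 : ∀ x ∈ Ioc 0 a, 0 ≤ p x)
    (hg_int : IntegrableOn g (Ioo 0 a)) (hgp_int : IntegrableOn (fun x => g x * p x) (Ioo 0 a))
    (hg0 : ∫ x in Ioo 0 a, g x = 0) : 0 ≤ ∫ x in Ioo 0 a, g x * p x := by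
  obtain ⟨M, hM⟩ := exists_forall_mul_sub_nonneg ⟨right_mem_Ioc.2 ha, fun _ h => h.2⟩ hp hp0
    fun x hx y hy => le_of_map_neg_of_map_pos hg hx hy.1
  exact setIntegral_mul_nonneg_of_integral_eq_zero measurableSet_Ioo hg_int hgp_int hg0
    fun x hx => hM x (Ioo_subset_Ioc_self hx)

theorem generalized_clausing_symmetric_general (p q φ : ℝ → ℝ)
    (hp_nonneg : ∀ x ∈ Ioo (0:ℝ) 1, 0 ≤ p x)
    (hq_int : IntegrableOn q (Ioo 0 1))
    (hp_symm : ∀ x ∈ Ioo (0:ℝ) 1, p x = p (1 - x))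
    (hq_symm : ∀ x ∈ Ioo (0:ℝ) 1, q x = q (1 - x))
    (hp_mono : MonotoneOn p (Ioc 0 (1/2)))
    (hq_conv : ConvexOn ℝ (Ioc 0 (1/2)) q)
    (hq_lim : Tendsto q (nhdsWithin 0 (Ioi 0)) (nhds 0))
    (hq_one : ∫ x in Ioo (0:ℝ) 1, q x = 1)
    (hφ_conc : ConcaveOn ℝ (Icc 0 1) φ)
    (hφ_int : IntegrableOn φ (Ioo 0 1))
    (hφ_symm : ∀ x ∈ Icc (0:ℝ) 1, φ x = φ (1 - x))
    (hφ_zero : 0 ≤ φ 0)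
    (hpφ_int : IntegrableOn (fun x => p x * φ x) (Ioo 0 1))
    (hpq_int : IntegrableOn (fun x => p x * q x) (Ioo 0 1)) :
    (0 ≤ ∫ x in Ioo (0:ℝ) (1/2),
        ((∫ t in Ioo (0:ℝ) 1, φ t) * q x - φ x) * p x) ∧
    ∫ x in Ioo (0:ℝ) 1, p x * φ x ≤
      (∫ t in Ioo (0:ℝ) 1, φ t) * ∫ x in Ioo (0:ℝ) 1, p x * q x := by
  set K := ∫ t in Ioo (0:ℝ) 1, φ t
  have hφ_symm' (x) (hx : x ∈ Ioo (0:ℝ) 1) : φ x = φ (1 - x) := hφ_symm x (Ioo_subset_Icc_self hx)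
  have hK : 0 ≤ K := by
    have hφ_one : φ 1 = φ 0 := by simpa using (hφ_symm 0 (left_mem_Icc.2 zero_le_one)).symm
    refine setIntegral_nonneg measurableSet_Ioo fun x hx => le_trans ?_ <|
      hφ_conc.min_le_of_mem_Icc (left_mem_Icc.2 zero_le_one) (right_mem_Icc.2 zero_le_one)
        (Ioo_subset_Icc_self hx)
    rwa [hφ_one, min_self]
  have hsub : Ioo (0:ℝ) (1/2) ⊆ Ioo 0 1 := Ioo_subset_Ioo_right (by norm_num)
  have hq' := hq_int.mono_set hsub
  have hφ' := hφ_int.mono_set hsub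
  have hpq' := hpq_int.mono_set hsub
  have hpφ' := hpφ_int.mono_set hsub
  have hgp : ∫ x in Ioo (0:ℝ) (1/2), (K * q x - φ x) * p x =
      K * (∫ x in Ioo (0:ℝ) (1/2), p x * q x) - ∫ x in Ioo (0:ℝ) (1/2), p x * φ x := by
    rw [← integral_const_mul, ← integral_sub (hpq'.const_mul K) hpφ']
    exact setIntegral_congr_fun measurableSet_Ioo fun x _ => by ring
  have hg_zero : ∫ x in Ioo (0:ℝ) (1/2), (K * q x - φ x) = 0 := by
    have hq_half : ∫ x in Ioo (0:ℝ) (1/2), q x = 1 / 2 := by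
      linarith [setIntegral_Ioo_zero_one_eq_two_mul_of_symm hq_int hq_symm]
    rw [integral_sub (hq'.const_mul K) hφ', integral_const_mul, hq_half]
    linarith [setIntegral_Ioo_zero_one_eq_two_mul_of_symm hφ_int hφ_symm']
  have part1 := setIntegral_mul_nonneg_of_map_mul_le (g := fun x => K * q x - φ x) (by norm_num)
    (fun x hx t ht => map_mul_le_mul_of_convexOn_of_concaveOn hK hq_conv hq_lim
      (hφ_conc.subset (Icc_subset_Icc_right (by norm_num)) (convex_Icc _ _)) hφ_zero hx ht)
    hp_mono (fun x hx => hp_nonneg x ⟨hx.1, hx.2.trans_lt (by norm_num)⟩)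
    ((hq'.const_mul K).sub hφ') ((hpq'.const_mul K).sub hpφ' |>.congr
      (ae_of_all _ fun x => by simp only [Pi.sub_apply]; ring)) hg_zero
  refine ⟨part1, ?_⟩
  rw [setIntegral_Ioo_zero_one_eq_two_mul_of_symm hpφ_int fun x hx => by
      rw [hp_symm x hx, hφ_symm' x hx],
    setIntegral_Ioo_zero_one_eq_two_mul_of_symm hpq_int fun x hx => by
      rw [hp_symm x hx, hq_symm x hx]]
  linarith [hgp ▸ part1]

/-- **Symmetric case of the generalized Clausing inequality.** Let `p, q` be nonnegative
integrable functions on `(0,1)`, both symmetric, with `p` non-decreasing on `(0, 1/2]`,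
`q` convex on `(0, 1/2]`, `q(x) → 0` as `x → 0⁺`, `q(0) = 0`, and `∫₀¹ q = 1`. Let
`φ : [0,1] → ℝ` be concave, integrable, symmetric and with `φ(0) ≥ 0`. Then, with
`K = ∫₀¹ φ`, one has `0 ≤ ∫₀^{1/2} (K q - φ) p`, i.e. `∫₀¹ p φ ≤ K ∫₀¹ p q`. -/
theorem generalized_clausing_symmetric (p q φ : ℝ → ℝ)
    (hp_nonneg : ∀ x ∈ Ioo (0:ℝ) 1, 0 ≤ p x)
    (hq_nonneg : ∀ x ∈ Ioo (0:ℝ) 1, 0 ≤ q x)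
    (hp_int : IntegrableOn p (Ioo 0 1))
    (hq_int : IntegrableOn q (Ioo 0 1))
    (hp_symm : ∀ x ∈ Ioo (0:ℝ) 1, p x = p (1 - x))
    (hq_symm : ∀ x ∈ Ioo (0:ℝ) 1, q x = q (1 - x))
    (hp_mono : MonotoneOn p (Ioc 0 (1/2)))
    (hq_conv : ConvexOn ℝ (Ioc 0 (1/2)) q)
    (hq_lim : Tendsto q (nhdsWithin 0 (Ioi 0)) (nhds 0))
    (hq_zero : q 0 = 0)
    (hq_one : ∫ x in Ioo (0:ℝ) 1, q x = 1)
    (hφ_conc : ConcaveOn ℝ (Icc 0 1) φ)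
    (hφ_int : IntegrableOn φ (Ioo 0 1))
    (hφ_symm : ∀ x ∈ Icc (0:ℝ) 1, φ x = φ (1 - x))
    (hφ_zero : 0 ≤ φ 0)
    (hpφ_int : IntegrableOn (fun x => p x * φ x) (Ioo 0 1))
    (hpq_int : IntegrableOn (fun x => p x * q x) (Ioo 0 1)) :
    (0 ≤ ∫ x in Ioo (0:ℝ) (1/2),
        ((∫ t in Ioo (0:ℝ) 1, φ t) * q x - φ x) * p x) ∧
    ∫ x in Ioo (0:ℝ) 1, p x * φ x ≤
      (∫ t in Ioo (0:ℝ) 1, φ t) * ∫ x in Ioo (0:ℝ) 1, p x * q x :=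
  generalized_clausing_symmetric_general p q φ hp_nonneg hq_int hp_symm hq_symm hp_mono hq_conv
    hq_lim hq_one hφ_conc hφ_int hφ_symm hφ_zero hpφ_int hpq_int
end

section
/- Let a < b and let h : [a,b] → ℝ be a convex integrable function with h(a) ≤ (1/(b-a)) ∫ₐᵇ h(t) dt. Then h belongs to the class M⁺ on [a,b]: there exists c ∈ [a,b] such that h(x) < (1/(b-a)) ∫ₐᵇ h(t) dt implies x < c, and h(x) > (1/(b-a)) ∫ₐᵇ h(t) dt implies x > c. -/
open MeasureTheory Set Filter Topology

/-!
Let `A` be the average of `h`. Since `h a ≤ A` and `h` is convex, every point where `h < A` lies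
to the left of every point where `h > A`, and `c` is taken to be the supremum of the former.
Convexity makes `{h < A}` open to the right and continuity at interior points makes `{h > A}` open
to the left, which gives the strict inequalities, except at `x = b`; there one needs `c < b`,
which holds because otherwise `h < A` on all of `(a, b)`, contradicting that `A` is the average.
-/

theorem ConvexOn.lt_of_mem_openSegment {E : Type*} [AddCommGroup E] [Module ℝ E] {s : Set E}
    {f : E → ℝ} {u v t : E} {A : ℝ} (hf : ConvexOn ℝ s f) (hu : u ∈ s) (hv : v ∈ s)
    (ht : t ∈ openSegment ℝ u v) (hfu : f u ≤ A) (hfv : f v < A) : f t < A := by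
  obtain ⟨α, β, hα, hβ, hαβ, rfl⟩ := ht
  calc f (α • u + β • v) ≤ α • f u + β • f v := hf.2 hu hv hα.le hβ.le hαβ
    _ < α • A + β • A :=
        add_lt_add_of_le_of_lt (smul_le_smul_of_nonneg_left hfu hα.le)
          (smul_lt_smul_of_pos_left hfv hβ)
    _ = A := Convex.combo_self hαβ A

theorem ConvexOn.exists_mem_Ioo_lt_of_lt {s : Set ℝ} {f : ℝ → ℝ} {x y A : ℝ}
    (hf : ConvexOn ℝ s f) (hx : x ∈ s) (hy : y ∈ s) (hxy : x < y) (hfx : f x < A) :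
    ∃ z ∈ Ioo x y, f z < A := by
  have hg : Tendsto (fun t : ℝ ↦ (1 - t) * f x + t * f y) (𝓝[>] 0) (𝓝 (f x)) := by
    refine tendsto_nhdsWithin_of_tendsto_nhds ?_
    simpa using (by fun_prop : Continuous fun t : ℝ ↦ (1 - t) * f x + t * f y).tendsto 0
  obtain ⟨t, hgt, ht⟩ := ((hg.eventually (gt_mem_nhds hfx)).and (Ioo_mem_nhdsGT one_pos)).exists
  refine ⟨(1 - t) * x + t * y, ⟨by nlinarith [ht.1], by nlinarith [ht.2]⟩, ?_⟩
  calc f ((1 - t) * x + t * y) ≤ (1 - t) * f x + t * f y :=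
        hf.2 hx hy (by linarith [ht.2]) ht.1.le (by ring)
    _ < A := hgt

theorem ConvexOn.exists_lt_lt_of_mem_interior {s : Set ℝ} {f : ℝ → ℝ} {x A : ℝ}
    (hf : ConvexOn ℝ s f) (hx : x ∈ interior s) (hfx : A < f x) :
    ∃ z ∈ s, z < x ∧ A < f z := by
  have hcont : ContinuousAt f x :=
    (hf.continuousOn_interior x hx).continuousAt (isOpen_interior.mem_nhds hx)
  obtain ⟨z, ⟨hfz, hzs⟩, hzx⟩ := (((hcont.eventually (lt_mem_nhds hfx)).and
    (mem_interior_iff_mem_nhds.1 hx)).filter_mono nhdsWithin_le_nhds |>.and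
      (self_mem_nhdsWithin : Iio x ∈ 𝓝[<] x)).exists
  exact ⟨z, hzs, hzx, hfz⟩

/-- `a` is inserted so that the supremum is not the junk value `sSup ∅ = 0` when `f ≥ A`
on `[a, b]`. -/
noncomputable def crossingPoint (f : ℝ → ℝ) (a b A : ℝ) : ℝ :=
  sSup (insert a {x ∈ Icc a b | f x < A})

section crossingPoint

variable {f : ℝ → ℝ} {a b A x y z : ℝ}

theorem bddAbove_insert_sublevel (f : ℝ → ℝ) (a b A : ℝ) :
    BddAbove (insert a {x ∈ Icc a b | f x < A}) :=
  (bddAbove_Icc.mono (sep_subset _ _)).insert a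

theorem left_le_crossingPoint : a ≤ crossingPoint f a b A :=
  le_csSup (bddAbove_insert_sublevel f a b A) (mem_insert a _)

theorem le_crossingPoint (hx : x ∈ Icc a b) (hfx : f x < A) : x ≤ crossingPoint f a b A :=
  le_csSup (bddAbove_insert_sublevel f a b A) (mem_insert_of_mem a ⟨hx, hfx⟩)

theorem crossingPoint_le (ha : a ≤ z) (hz : ∀ x ∈ Icc a b, f x < A → x ≤ z) :
    crossingPoint f a b A ≤ z :=
  csSup_le (insert_nonempty a _) <| by
    rintro x (rfl | ⟨hx, hfx⟩)
    exacts [ha, hz x hx hfx]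

theorem ConvexOn.sublevel_lt_superlevel (hf : ConvexOn ℝ (Icc a b) f) (ha : f a ≤ A)
    (hy : y ∈ Icc a b) (hfy : f y < A) (hax : a ≤ x) (hfx : A < f x) : y < x := by
  by_contra! hxy
  have := hf.le_max_of_mem_Icc (left_mem_Icc.2 (hy.1.trans hy.2)) hy ⟨hax, hxy⟩
  linarith [max_le ha hfy.le]

theorem ConvexOn.crossingPoint_le_of_lt (hf : ConvexOn ℝ (Icc a b) f) (ha : f a ≤ A)
    (hz : z ∈ Icc a b) (hfz : A < f z) : crossingPoint f a b A ≤ z :=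
  crossingPoint_le hz.1 fun _ hx hfx ↦ (hf.sublevel_lt_superlevel ha hx hfx hz.1 hfz).le

theorem ConvexOn.crossingPoint_lt_right (hab : a < b) (hf : ConvexOn ℝ (Icc a b) f)
    (hint : IntervalIntegrable f volume a b) (ha : f a ≤ A)
    (hI : ∫ t in a..b, f t = (b - a) * A) : crossingPoint f a b A < b := by
  refine (crossingPoint_le hab.le fun x hx _ ↦ hx.2).lt_of_ne fun hcb ↦ ?_
  have hlt : ∀ t ∈ Ioo a b, f t < A := by
    intro t ht
    obtain ⟨q, hq, htq⟩ := exists_lt_of_lt_csSup (insert_nonempty a _) (hcb ▸ ht.2)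
    obtain ⟨hqI, hfq⟩ : q ∈ {x ∈ Icc a b | f x < A} := hq.resolve_left (ht.1.trans htq).ne'
    exact hf.lt_of_mem_openSegment (left_mem_Icc.2 hab.le) hqI
      (by rw [openSegment_eq_Ioo (ht.1.trans htq)]; exact ⟨ht.1, htq⟩) ha hfq
  have hpos := intervalIntegral.intervalIntegral_pos_of_pos_on (intervalIntegrable_const.sub hint)
    (fun t ht ↦ sub_pos.2 (hlt t ht)) hab
  rw [intervalIntegral.integral_sub intervalIntegrable_const hint, intervalIntegral.integral_const,
    hI, smul_eq_mul, sub_self] at hpos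
  exact hpos.false

end crossingPoint

/-- A convex integrable function `h : [a,b] → ℝ` with `h(a)` at most its average belongs
to the class `M⁺`: there is `c ∈ [a,b]` such that, for `x ∈ [a,b]`,
`h x < avg → x < c` and `h x > avg → x > c`, where `avg = (1/(b-a)) ∫ₐᵇ h`. -/
theorem convex_mem_MPlus (a b : ℝ) (hab : a < b) (h : ℝ → ℝ)
    (hh_conv : ConvexOn ℝ (Icc a b) h)
    (hh_int : IntegrableOn h (Icc a b))
    (hh_a : h a ≤ (1 / (b - a)) * ∫ t in a..b, h t) :
    ∃ c ∈ Icc a b, ∀ x ∈ Icc a b,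
      (h x < (1 / (b - a)) * ∫ t in a..b, h t → x < c) ∧
      ((1 / (b - a)) * ∫ t in a..b, h t < h x → c < x) := by
  set A := (1 / (b - a)) * ∫ t in a..b, h t with hA
  have hI : ∫ t in a..b, h t = (b - a) * A := by
    rw [hA, ← mul_assoc, mul_one_div_cancel (sub_pos.2 hab).ne', one_mul]
  have hint : IntervalIntegrable h volume a b :=
    (uIcc_of_le hab.le ▸ hh_int).intervalIntegrable
  have hcb := hh_conv.crossingPoint_lt_right hab hint hh_a hI
  refine ⟨crossingPoint h a b A, ⟨left_le_crossingPoint, hcb.le⟩,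
    fun x hx ↦ ⟨fun hxA ↦ ?_, fun hxA ↦ ?_⟩⟩
  · obtain ⟨y, hxy, hyA⟩ := hh_conv.exists_mem_Ioo_lt_of_lt hx (right_mem_Icc.2 hab.le)
      ((le_crossingPoint hx hxA).trans_lt hcb) hxA
    have hy : y ∈ Icc a b := ⟨hx.1.trans hxy.1.le, hxy.2.le⟩
    exact hxy.1.trans_le (le_crossingPoint hy hyA)
  · rcases hx.2.eq_or_lt with rfl | hxb
    · exact hcb
    have hax : a < x := hx.1.lt_of_ne (by rintro rfl; linarith)
    obtain ⟨z, hz, hzx, hAz⟩ := hh_conv.exists_lt_lt_of_mem_interior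
      (by rw [interior_Icc]; exact ⟨hax, hxb⟩) hxA
    exact (hh_conv.crossingPoint_le_of_lt hh_a hz hAz).trans_lt hzx
end

section
/- Let q : (0,1) → ℝ be a nonnegative integrable function that is symmetric (q(x) = q(1-x) for all x ∈ (0,1)), convex on (0, 1/2], satisfies q(x) → 0 as x → 0⁺, and ∫₀¹ q(x) dx = 1. Let p : (0,1) → ℝ be a nonnegative integrable function that is symmetric and non-decreasing on (0, 1/2]. Then, with q₀(x) = 4·min{x, 1-x}, one has ∫₀¹ p(x)·q₀(x) dx ≤ ∫₀¹ p(x)·q(x) dx; that is, q₀ provides the best (smallest) bound among all admissible q in the generalized Clausing inequality. -/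
open MeasureTheory Set Filter Topology

/-!
On `(0, 1/2]` compare `q` with `q₀(x) = 4x`. Since `q` is convex with `q(0⁺) = 0`, the ratio
`q(x)/x` is non-decreasing, so `q - q₀` is `≤ 0` up to some point `c` and `> 0` after it, while
`∫₀^{1/2} (q - q₀) = 0`. As `p` is non-decreasing, `(p - p(c)) (q - q₀) ≥ 0`, and integrating gives
`∫₀^{1/2} p (q - q₀) ≥ p(c) ∫₀^{1/2} (q - q₀) = 0`. Symmetry doubles both sides to `(0, 1)`.
-/

lemma ConvexOn.monotoneOn_div_self_of_tendsto_zero {f : ℝ → ℝ} {a : ℝ}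
    (hf : ConvexOn ℝ (Ioc 0 a) f) (hf0 : Tendsto f (𝓝[>] 0) (𝓝 0)) :
    MonotoneOn (fun x => f x / x) (Ioc 0 a) := by
  intro x hx y hy hxy
  have hchord : ∀ᶠ t in 𝓝[>] 0, (f x - f t) / (x - t) ≤ (f y - f t) / (y - t) := by
    filter_upwards [Ioo_mem_nhdsGT hx.1] with t ht
    exact hf.secant_mono ⟨ht.1, ht.2.le.trans hx.2⟩ hx hy ht.2.ne' (ht.2.trans_le hxy).ne' hxy
  have hslope : ∀ z, 0 < z → Tendsto (fun t => (f z - f t) / (z - t)) (𝓝[>] 0) (𝓝 (f z / z)) := by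
    intro z hz
    have hnum : Tendsto (fun t => f z - f t) (𝓝[>] 0) (𝓝 (f z - 0)) :=
      tendsto_const_nhds.sub hf0
    have hden : Tendsto (fun t : ℝ => z - t) (𝓝[>] 0) (𝓝 (z - 0)) :=
      tendsto_const_nhds.sub (tendsto_nhdsWithin_of_tendsto_nhds tendsto_id)
    rw [sub_zero] at hnum hden
    exact hnum.div hden hz.ne'
  exact le_of_tendsto_of_tendsto (hslope x hx.1) (hslope y hy.1) hchord

lemma exists_forall_sub_mul_nonneg_of_monotoneOn {p h : ℝ → ℝ} {a b m : ℝ}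
    (hp : MonotoneOn p (Ioc a b)) (hpm : ∀ x ∈ Ioc a b, m ≤ p x)
    (hh : ∀ x ∈ Ioc a b, ∀ y ∈ Ioc a b, x ≤ y → h y ≤ 0 → h x ≤ 0) :
    ∃ M, ∀ x ∈ Ioc a b, 0 ≤ (p x - M) * h x := by
  set S := {x ∈ Ioc a b | h x ≤ 0}
  rcases S.eq_empty_or_nonempty with hS | hS
  · refine ⟨m, fun x hx => mul_nonneg (sub_nonneg.2 (hpm x hx)) ?_⟩
    exact (not_le.1 fun hx' => eq_empty_iff_forall_notMem.1 hS x ⟨hx, hx'⟩).le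
  have hbdd : BddAbove S := ⟨b, fun x hx => hx.1.2⟩
  obtain ⟨x₀, hx₀⟩ := hS
  have hc : sSup S ∈ Ioc a b :=
    ⟨hx₀.1.1.trans_le (le_csSup hbdd hx₀), csSup_le ⟨x₀, hx₀⟩ fun x hx => hx.1.2⟩
  refine ⟨p (sSup S), fun x hx => ?_⟩
  rcases lt_trichotomy x (sSup S) with hxc | rfl | hcx
  · obtain ⟨y, hy, hxy⟩ := exists_lt_of_lt_csSup ⟨x₀, hx₀⟩ hxc
    exact mul_nonneg_of_nonpos_of_nonpos (sub_nonpos.2 (hp hx hc hxc.le))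
      (hh x hx y hy.1 hxy.le hy.2)
  · simp
  · have hhx : 0 < h x := not_le.1 fun hx' => (le_csSup hbdd ⟨hx, hx'⟩).not_gt hcx
    exact mul_nonneg (sub_nonneg.2 (hp hc hx hcx.le)) hhx.le

lemma setIntegral_mul_nonneg_of_sub_mul_nonneg {α : Type*} [MeasurableSpace α] {μ : Measure α}
    {s : Set α} {p h : α → ℝ} {M : ℝ} (hs : MeasurableSet s)
    (hph : IntegrableOn (fun x => p x * h x) s μ) (hh : IntegrableOn h s μ)
    (hh0 : ∫ x in s, h x ∂μ = 0) (hM : ∀ x ∈ s, 0 ≤ (p x - M) * h x) :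
    0 ≤ ∫ x in s, p x * h x ∂μ :=
  calc 0 ≤ ∫ x in s, (p x - M) * h x ∂μ := setIntegral_nonneg hs hM
    _ = ∫ x in s, p x * h x ∂μ - M * ∫ x in s, h x ∂μ := by
      simp_rw [sub_mul]
      rw [integral_sub hph (hh.const_mul M), integral_const_mul]
    _ = ∫ x in s, p x * h x ∂μ := by rw [hh0, mul_zero, sub_zero]

lemma integral_Ioo_zero_one_eq_two_mul_of_symm {f : ℝ → ℝ} (hf : IntegrableOn f (Ioo 0 1))
    (hsymm : ∀ x ∈ Ioo (0:ℝ) 1, f x = f (1 - x)) :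
    ∫ x in Ioo (0:ℝ) 1, f x = 2 * ∫ x in Ioc (0:ℝ) (1/2), f x := by
  have hint : ∀ a b : ℝ, 0 ≤ a → a ≤ b → b ≤ 1 → IntervalIntegrable f volume a b :=
    fun a b ha hab hb =>
      (intervalIntegrable_iff_integrableOn_Ioo_of_le hab).2 (hf.mono_set (Ioo_subset_Ioo ha hb))
  rw [← integral_Ioc_eq_integral_Ioo, ← intervalIntegral.integral_of_le zero_le_one,
    ← intervalIntegral.integral_of_le (by norm_num),
    ← intervalIntegral.integral_add_adjacent_intervals (b := 1/2)
      (hint _ _ le_rfl (by norm_num) (by norm_num)) (hint _ _ (by norm_num) (by norm_num) le_rfl)]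
  have hreflect : ∫ x in (1/2:ℝ)..1, f x = ∫ x in (0:ℝ)..(1/2), f x := by
    rw [show ∫ x in (1/2:ℝ)..1, f x = ∫ x in (0:ℝ)..(1/2), f (1 - x) by
      rw [intervalIntegral.integral_comp_sub_left]; norm_num]
    refine intervalIntegral.integral_congr_ae (ae_of_all _ fun x hx => ?_)
    rw [uIoc_of_le (by norm_num)] at hx
    exact (hsymm x ⟨hx.1, hx.2.trans_lt (by norm_num)⟩).symm
  rw [hreflect, two_mul]

lemma setIntegral_Ioc_mul_linear_le_of_convexOn {p q : ℝ → ℝ} {a c m : ℝ}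
    (hp : MonotoneOn p (Ioc 0 a)) (hpm : ∀ x ∈ Ioc 0 a, m ≤ p x)
    (hq : ConvexOn ℝ (Ioc 0 a) q) (hq0 : Tendsto q (𝓝[>] 0) (𝓝 0))
    (hq_int : IntegrableOn q (Ioc 0 a)) (hmass : ∫ x in Ioc 0 a, q x = ∫ x in Ioc 0 a, c * x)
    (hpq : IntegrableOn (fun x => p x * q x) (Ioc 0 a))
    (hpc : IntegrableOn (fun x => p x * (c * x)) (Ioc 0 a)) :
    ∫ x in Ioc 0 a, p x * (c * x) ≤ ∫ x in Ioc 0 a, p x * q x := by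
  have hlin : IntegrableOn (fun x : ℝ => c * x) (Ioc 0 a) :=
    (continuous_const.mul continuous_id).integrableOn_Ioc
  have hcross : ∀ x ∈ Ioc 0 a, ∀ y ∈ Ioc 0 a, x ≤ y → q y - c * y ≤ 0 → q x - c * x ≤ 0 := by
    intro x hx y hy hxy hqy
    rw [sub_nonpos, ← div_le_iff₀ hy.1] at hqy
    rw [sub_nonpos, ← div_le_iff₀ hx.1]
    exact (hq.monotoneOn_div_self_of_tendsto_zero hq0 hx hy hxy).trans hqy
  obtain ⟨M, hM⟩ := exists_forall_sub_mul_nonneg_of_monotoneOn hp hpm hcross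
  have hpos := setIntegral_mul_nonneg_of_sub_mul_nonneg (h := fun x => q x - c * x)
    measurableSet_Ioc ((hpq.sub hpc).congr_fun (fun x _ => by simp only [Pi.sub_apply]; ring)
      measurableSet_Ioc) (hq_int.sub hlin) (by rw [integral_sub hq_int hlin, hmass, sub_self]) hM
  simp_rw [mul_sub] at hpos
  rw [integral_sub hpq hpc] at hpos
  linarith

theorem clausing_q0_best_general (p q : ℝ → ℝ)
    (hq_int : IntegrableOn q (Ioo 0 1))
    (hq_symm : ∀ x ∈ Ioo (0:ℝ) 1, q x = q (1 - x))
    (hq_conv : ConvexOn ℝ (Ioc 0 (1/2)) q)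
    (hq_lim : Tendsto q (nhdsWithin 0 (Ioi 0)) (nhds 0))
    (hq_one : ∫ x in Ioo (0:ℝ) 1, q x = 1)
    (hp_nonneg : ∀ x ∈ Ioo (0:ℝ) 1, 0 ≤ p x)
    (hp_symm : ∀ x ∈ Ioo (0:ℝ) 1, p x = p (1 - x))
    (hp_mono : MonotoneOn p (Ioc 0 (1/2)))
    (hpq_int : IntegrableOn (fun x => p x * q x) (Ioo 0 1))
    (hpq0_int : IntegrableOn (fun x => p x * (4 * min x (1 - x))) (Ioo 0 1)) :
    ∫ x in Ioo (0:ℝ) 1, p x * (4 * min x (1 - x)) ≤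
      ∫ x in Ioo (0:ℝ) 1, p x * q x := by
  have hsub : Ioc (0:ℝ) (1/2) ⊆ Ioo 0 1 := Ioc_subset_Ioo_right (by norm_num)
  have hq₀ : ∀ x ∈ Ioc (0:ℝ) (1/2), p x * (4 * min x (1 - x)) = p x * (4 * x) :=
    fun x hx => by rw [min_eq_left (by linarith [hx.2])]
  have hlhs : ∫ x in Ioo (0:ℝ) 1, p x * (4 * min x (1 - x))
      = 2 * ∫ x in Ioc (0:ℝ) (1/2), p x * (4 * x) := by
    rw [integral_Ioo_zero_one_eq_two_mul_of_symm hpq0_int fun x hx => by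
      rw [← hp_symm x hx, sub_sub_cancel, min_comm], setIntegral_congr_fun measurableSet_Ioc hq₀]
  have hrhs := integral_Ioo_zero_one_eq_two_mul_of_symm hpq_int fun x hx => by
    rw [← hp_symm x hx, ← hq_symm x hx]
  have hmass : ∫ x in Ioc (0:ℝ) (1/2), q x = ∫ x in Ioc (0:ℝ) (1/2), 4 * x := by
    rw [← intervalIntegral.integral_of_le (f := fun x => 4 * x) (by norm_num),
      intervalIntegral.integral_const_mul, integral_id]
    linarith [integral_Ioo_zero_one_eq_two_mul_of_symm hq_int hq_symm]
  have hhalf := setIntegral_Ioc_mul_linear_le_of_convexOn hp_mono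
    (fun x hx => hp_nonneg x (hsub hx)) hq_conv hq_lim (hq_int.mono_set hsub) hmass
    (hpq_int.mono_set hsub) ((hpq0_int.mono_set hsub).congr_fun hq₀ measurableSet_Ioc)
  linarith

/-- **Optimality of `q₀(x) = 4 min{x, 1-x}`.** Let `q` be nonnegative, integrable,
symmetric on `(0,1)`, convex on `(0, 1/2]`, with `q(x) → 0` as `x → 0⁺` and
`∫₀¹ q = 1`, and let `p` be nonnegative, integrable, symmetric and non-decreasing on
`(0, 1/2]` (products assumed integrable). Then `∫₀¹ p q₀ ≤ ∫₀¹ p q`. -/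
theorem clausing_q0_best (p q : ℝ → ℝ)
    (hq_nonneg : ∀ x ∈ Ioo (0:ℝ) 1, 0 ≤ q x)
    (hq_int : IntegrableOn q (Ioo 0 1))
    (hq_symm : ∀ x ∈ Ioo (0:ℝ) 1, q x = q (1 - x))
    (hq_conv : ConvexOn ℝ (Ioc 0 (1/2)) q)
    (hq_lim : Tendsto q (nhdsWithin 0 (Ioi 0)) (nhds 0))
    (hq_one : ∫ x in Ioo (0:ℝ) 1, q x = 1)
    (hp_nonneg : ∀ x ∈ Ioo (0:ℝ) 1, 0 ≤ p x)
    (hp_int : IntegrableOn p (Ioo 0 1))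
    (hp_symm : ∀ x ∈ Ioo (0:ℝ) 1, p x = p (1 - x))
    (hp_mono : MonotoneOn p (Ioc 0 (1/2)))
    (hpq_int : IntegrableOn (fun x => p x * q x) (Ioo 0 1))
    (hpq0_int : IntegrableOn (fun x => p x * (4 * min x (1 - x))) (Ioo 0 1)) :
    ∫ x in Ioo (0:ℝ) 1, p x * (4 * min x (1 - x)) ≤
      ∫ x in Ioo (0:ℝ) 1, p x * q x :=
  clausing_q0_best_general p q hq_int hq_symm hq_conv hq_lim hq_one hp_nonneg hp_symm hp_mono
    hpq_int hpq0_int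
end
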